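/- arXiv:0803.1346 — 9 statements merged into one kernel-verified Lean document; each statement's English description precedes it below -/
import Mathlib

section
/- Let k be a field and let Γ be an r×r diagonal matrix over k[[t]] with diagonal entries α_1,…,α_r. Let B be an r×r matrix over k[[t]] all of whose entries are divisible by t^m for some positive integer m. Then any eigenvalue β ∈ k[[t_d]] of Γ + B (where t_d^d = t, i.e. β lies in a ramified extension of the power series ring) satisfies ord_t(β − α_i) ≥ m for some index i. -/
/-!
Pick a coordinate `i` at which the eigenvector `v` is largest for the `t`-adic valuation. The
`i`-th row of `(Γ + B) v = β v` reads `(β - α i) v i = ∑ j, B i j * v j`, and by the ultrametric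
inequality the right-hand side has valuation at most `|t|^m · |v i|`. Cancelling `v i ≠ 0` gives
`|β - α i| ≤ |t|^m`.
-/

noncomputable section

open PowerSeries
open scoped Matrix

namespace Valuation

variable {K Γ₀ : Type*} [Field K] [LinearOrderedCommGroupWithZero Γ₀] (w : Valuation K Γ₀)
variable {n : Type*} [Fintype n]

theorem exists_ne_zero_forall_le {v : n → K} (hv : v ≠ 0) :
    ∃ i, v i ≠ 0 ∧ ∀ j, w (v j) ≤ w (v i) := by
  obtain ⟨j₀, hj₀⟩ := Function.ne_iff.mp hv
  obtain ⟨i, -, hmax⟩ := Finset.univ.exists_max_image (fun j => w (v j)) ⟨j₀, Finset.mem_univ _⟩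
  refine ⟨i, fun hi => hj₀ ?_, fun j => hmax j (Finset.mem_univ _)⟩
  simpa [hi] using hmax j₀ (Finset.mem_univ _)

theorem map_mulVec_apply_le {A : Matrix n n K} {γ : Γ₀} (hA : ∀ i j, w (A i j) ≤ γ)
    {v : n → K} {i : n} (hmax : ∀ j, w (v j) ≤ w (v i)) :
    w ((A *ᵥ v) i) ≤ γ * w (v i) :=
  w.map_sum_le fun j _ => by
    rw [map_mul]
    exact mul_le_mul' (hA i j) (hmax j)

theorem exists_map_sub_le_of_diagonal_add_mulVec_eq [DecidableEq n] {α : n → K}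
    {E : Matrix n n K} {γ : Γ₀} (hE : ∀ i j, w (E i j) ≤ γ) {β : K} {v : n → K} (hv : v ≠ 0)
    (heig : (Matrix.diagonal α + E) *ᵥ v = β • v) :
    ∃ i, w (β - α i) ≤ γ := by
  obtain ⟨i, hvi, hmax⟩ := w.exists_ne_zero_forall_le hv
  have hrow : (β - α i) * v i = (E *ᵥ v) i := by
    have := congrFun heig i
    rw [Matrix.add_mulVec, Pi.add_apply, Matrix.mulVec_diagonal, Pi.smul_apply, smul_eq_mul] at this
    rw [sub_mul, ← this]
    ring
  refine ⟨i, (mul_le_mul_iff_left₀ (zero_lt_iff.mpr (w.ne_zero_iff.mpr hvi))).mp ?_⟩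
  rw [← map_mul, hrow]
  exact w.map_mulVec_apply_le hE hmax

end Valuation

theorem PowerSeries.X_pow_dvd_iff_valuation_le {K : Type*} [Field K] {f : K⟦X⟧} {d : ℕ} :
    X ^ d ∣ f ↔ Valued.v (f : LaurentSeries K) ≤ WithZero.exp (-d : ℤ) :=
  X_pow_dvd_iff.trans (LaurentSeries.intValuation_le_iff_coeff_lt_eq_zero K f).symm

theorem eigenvalue_perturbation_of_diagonal_plus_small_general
    {k : Type} [Field k] (r d m : ℕ)
    (α : Fin r → PowerSeries k)
    (B : Matrix (Fin r) (Fin r) (PowerSeries k))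
    (hB : ∀ i j, (X : PowerSeries k) ^ m ∣ B i j)
    (φ : PowerSeries k →+* PowerSeries k)
    (hφX : φ X = X ^ d)
    (β : PowerSeries k)
    (v : Fin r → LaurentSeries k) (hv : v ≠ 0)
    (heig :
      ((Matrix.diagonal α + B).map fun a => HahnSeries.ofPowerSeries ℤ k (φ a)).mulVec v
        = fun i => HahnSeries.ofPowerSeries ℤ k β * v i) :
    ∃ i, (X : PowerSeries k) ^ (d * m) ∣ (β - φ (α i)) := by
  set ψ : PowerSeries k →+* LaurentSeries k := (HahnSeries.ofPowerSeries ℤ k).comp φ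
  have hψB : ∀ i j, Valued.v (ψ (B i j)) ≤ WithZero.exp (-(d * m : ℕ) : ℤ) := fun i j =>
    X_pow_dvd_iff_valuation_le.mp <| by simpa [hφX, ← pow_mul] using map_dvd φ (hB i j)
  have heig' : (Matrix.diagonal (fun i => ψ (α i)) + B.map ψ) *ᵥ v =
      HahnSeries.ofPowerSeries ℤ k β • v := by
    rw [← Matrix.diagonal_map (map_zero ψ), ← Matrix.map_add _ (map_add ψ)]
    exact heig
  obtain ⟨i, hi⟩ := Valued.v.exists_map_sub_le_of_diagonal_add_mulVec_eq hψB hv heig'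
  exact ⟨i, X_pow_dvd_iff_valuation_le.mpr (by rwa [map_sub])⟩

theorem eigenvalue_perturbation_of_diagonal_plus_small
    {k : Type} [Field k] (r d m : ℕ) (hd : 0 < d) (hm : 0 < m)
    (α : Fin r → PowerSeries k)
    (B : Matrix (Fin r) (Fin r) (PowerSeries k))
    (hB : ∀ i j, (X : PowerSeries k) ^ m ∣ B i j)
    (φ : PowerSeries k →+* PowerSeries k)
    (hφC : ∀ a : k, φ (C a) = C a) (hφX : φ X = X ^ d)
    (β : PowerSeries k)
    (v : Fin r → LaurentSeries k) (hv : v ≠ 0)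
    (heig :
      ((Matrix.diagonal α + B).map fun a => HahnSeries.ofPowerSeries ℤ k (φ a)).mulVec v
        = fun i => HahnSeries.ofPowerSeries ℤ k β * v i) :
    ∃ i, (X : PowerSeries k) ^ (d * m) ∣ (β - φ (α i)) :=
  eigenvalue_perturbation_of_diagonal_plus_small_general r d m α B hB φ hφX β v hv heig
end
end

section
/- Let R be a commutative ring, and let P(T) ∈ R[[t]][T] be a monic polynomial of degree r whose specialization P_0(T) at t = 0 factors as P_0 = h̄_1·h̄_2 with h̄_1, h̄_2 monic polynomials in R[T] satisfying a Bézout identity 1 = h̄_1·F_1 + h̄_2·F_2 for some F_1, F_2 ∈ R[T]. Then P(T) factors in R[[t]][T] as P = h_1·h_2 with h_1, h_2 monic and h_i(T) ≡ h̄_i(T) mod t. -/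
/-!
Swapping the two variables embeds `R⟦t⟧[X]` into `R[X]⟦t⟧`, and a monic `P` of degree `d` becomes
a series `∑ Pₙ tⁿ` with `P₀` monic of degree `d` and `deg Pₙ < d` for `n > 0`; conversely such a
series comes from a monic polynomial. In `R[X]⟦t⟧` the factors `U = ∑ uₙ tⁿ`, `V = ∑ vₙ tⁿ` with
`u₀ = h̄₁`, `v₀ = h̄₂` are found coefficient by coefficient: the `tⁿ⁺¹`-coefficient of `U V = P`
asks for `h̄₁ vₙ₊₁ + uₙ₊₁ h̄₂ = Eₙ` with `Eₙ` known and of degree `< deg h̄₁ + deg h̄₂`, and the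
Bézout identity together with division by the monic `h̄₂` solves it with `deg uₙ₊₁ < deg h̄₁`
and `deg vₙ₊₁ < deg h̄₂`.
-/

open Polynomial

namespace Polynomial

variable {R : Type*} [CommRing R]

noncomputable def swapPowerSeries : (PowerSeries R)[X] →+* PowerSeries R[X] :=
  eval₂RingHom (PowerSeries.map C) (PowerSeries.C X)

@[simp]
theorem coeff_coeff_swapPowerSeries (P : (PowerSeries R)[X]) (n k : ℕ) :
    (PowerSeries.coeff n (swapPowerSeries P)).coeff k = PowerSeries.coeff n (P.coeff k) := by
  induction P using Polynomial.induction_on' with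
  | add p q hp hq => simp [hp, hq]
  | monomial e a =>
    simp only [swapPowerSeries, coe_eval₂RingHom, eval₂_monomial, ← map_pow,
      PowerSeries.coeff_mul_C, PowerSeries.coeff_map, coeff_C_mul, coeff_X_pow, coeff_monomial]
    split_ifs <;> simp_all

theorem swapPowerSeries_injective : Function.Injective (swapPowerSeries (R := R)) := by
  intro P Q h
  ext k n
  rw [← coeff_coeff_swapPowerSeries, h, coeff_coeff_swapPowerSeries]

theorem constantCoeff_swapPowerSeries (P : (PowerSeries R)[X]) :
    PowerSeries.constantCoeff (swapPowerSeries P) = P.map PowerSeries.constantCoeff := by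
  ext k
  rw [coeff_map, ← PowerSeries.coeff_zero_eq_constantCoeff_apply, coeff_coeff_swapPowerSeries,
    PowerSeries.coeff_zero_eq_constantCoeff_apply]

theorem degree_coeff_swapPowerSeries_lt {P : (PowerSeries R)[X]} (hP : P.Monic) {n : ℕ}
    (hn : 0 < n) :
    (PowerSeries.coeff n (swapPowerSeries P)).degree <
      (PowerSeries.constantCoeff (swapPowerSeries P)).natDegree := by
  nontriviality R
  rw [constantCoeff_swapPowerSeries, hP.natDegree_map, degree_lt_iff_coeff_zero]
  intro k hk
  rw [coeff_coeff_swapPowerSeries]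
  obtain hk | hk := hk.eq_or_lt
  · rw [← hk, hP.coeff_natDegree, PowerSeries.coeff_one, if_neg hn.ne']
  · rw [coeff_eq_zero_of_natDegree_lt hk, map_zero]

theorem exists_monic_swapPowerSeries_eq {U : PowerSeries R[X]}
    (hU₀ : (PowerSeries.constantCoeff U).Monic)
    (hU : ∀ n, 0 < n →
      (PowerSeries.coeff n U).degree < (PowerSeries.constantCoeff U).natDegree) :
    ∃ H : (PowerSeries R)[X], H.Monic ∧ swapPowerSeries H = U := by
  set d := (PowerSeries.constantCoeff U).natDegree
  have hU_le : ∀ n, (PowerSeries.coeff n U).degree ≤ (d : WithBot ℕ) := by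
    rintro (_ | n)
    · rw [PowerSeries.coeff_zero_eq_constantCoeff_apply]
      exact degree_le_natDegree
    · exact (hU _ n.succ_pos).le
  let H : (PowerSeries R)[X] :=
    ∑ k ∈ Finset.range (d + 1),
      monomial k (PowerSeries.mk fun n => (PowerSeries.coeff n U).coeff k)
  have hH : ∀ k, H.coeff k = PowerSeries.mk fun n => (PowerSeries.coeff n U).coeff k := by
    intro k
    simp only [H, finsetSum_coeff, coeff_monomial, Finset.sum_ite_eq', Finset.mem_range]
    split_ifs with hk
    · rfl
    · ext n
      rw [PowerSeries.coeff_mk, map_zero, coeff_eq_zero_of_degree_lt]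
      exact (hU_le n).trans_lt (by exact_mod_cast (by omega : d < k))
  refine ⟨H, monic_of_natDegree_le_of_coeff_eq_one d ?_ ?_, ?_⟩
  · rw [natDegree_le_iff_coeff_eq_zero]
    intro k hk
    ext n
    rw [hH, PowerSeries.coeff_mk, map_zero,
      coeff_eq_zero_of_degree_lt ((hU_le n).trans_lt (by exact_mod_cast hk))]
  · ext (_ | n)
    · rw [hH, PowerSeries.coeff_mk, PowerSeries.coeff_one, if_pos rfl,
        PowerSeries.coeff_zero_eq_constantCoeff_apply, hU₀.coeff_natDegree]
    · rw [hH, PowerSeries.coeff_mk, PowerSeries.coeff_one, if_neg n.succ_ne_zero,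
        coeff_eq_zero_of_degree_lt (hU _ n.succ_pos)]
  · ext n k
    rw [coeff_coeff_swapPowerSeries, hH, PowerSeries.coeff_mk]

theorem degree_mul_lt_of_le_of_lt {p q : R[X]} {a b : ℕ} (hp : p.degree ≤ a)
    (hq : q.degree < b) :
    (p * q).degree < ↑(a + b) := by
  rcases eq_or_ne p 0 with rfl | hp₀
  · simp
  rw [Nat.cast_add]
  exact (degree_mul_le p q).trans_lt (WithBot.add_lt_add_of_le_of_lt (degree_ne_bot.2 hp₀) hp hq)

section BezoutSplit

variable {h₁ h₂ F₁ F₂ : R[X]}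

noncomputable def bezoutSplit (h₁ h₂ F₁ F₂ E : R[X]) : R[X] × R[X] :=
  (F₂ * E + h₁ * (F₁ * E /ₘ h₂), F₁ * E %ₘ h₂)

theorem bezoutSplit_spec (hbez : h₁ * F₁ + h₂ * F₂ = 1) (E : R[X]) :
    h₁ * (bezoutSplit h₁ h₂ F₁ F₂ E).2 + (bezoutSplit h₁ h₂ F₁ F₂ E).1 * h₂ = E := by
  simp only [bezoutSplit]
  linear_combination h₁ * modByMonic_add_div (F₁ * E) h₂ + E * hbez

theorem degree_bezoutSplit_snd_lt (hm₂ : h₂.Monic) (E : R[X]) :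
    (bezoutSplit h₁ h₂ F₁ F₂ E).2.degree < h₂.natDegree := by
  nontriviality R
  rw [← degree_eq_natDegree hm₂.ne_zero]
  exact degree_modByMonic_lt _ hm₂

theorem degree_bezoutSplit_fst_lt (hm₂ : h₂.Monic) (hbez : h₁ * F₁ + h₂ * F₂ = 1) {E : R[X]}
    (hE : E.degree < ↑(h₁.natDegree + h₂.natDegree)) :
    (bezoutSplit h₁ h₂ F₁ F₂ E).1.degree < h₁.natDegree := by
  nontriviality R
  have h_eq : (bezoutSplit h₁ h₂ F₁ F₂ E).1 * h₂ = E - h₁ * (bezoutSplit h₁ h₂ F₁ F₂ E).2 := by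
    linear_combination bezoutSplit_spec hbez E
  have h_lt : ((bezoutSplit h₁ h₂ F₁ F₂ E).1 * h₂).degree < ↑(h₁.natDegree + h₂.natDegree) := by
    rw [h_eq]
    exact (degree_sub_le _ _).trans_lt
      (max_lt hE (degree_mul_lt_of_le_of_lt degree_le_natDegree (degree_bezoutSplit_snd_lt hm₂ E)))
  rw [hm₂.degree_mul, degree_eq_natDegree hm₂.ne_zero, Nat.cast_add] at h_lt
  exact lt_of_add_lt_add_right h_lt

end BezoutSplit

end Polynomial

namespace PowerSeries

variable {R : Type*} [CommRing R]

section HenselCoeff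

variable (Q : PowerSeries R[X]) (h₁ h₂ F₁ F₂ : R[X])

noncomputable def henselCoeff : ℕ → R[X] × R[X]
  | 0 => (h₁, h₂)
  | n + 1 => bezoutSplit h₁ h₂ F₁ F₂ (coeff (n + 1) Q -
      ∑ i ∈ (Finset.range n).attach, (henselCoeff (i + 1)).1 * (henselCoeff (n - i)).2)
decreasing_by all_goals have := Finset.mem_range.1 i.2; omega

theorem henselCoeff_zero : henselCoeff Q h₁ h₂ F₁ F₂ 0 = (h₁, h₂) := by
  rw [henselCoeff]

theorem henselCoeff_succ (n : ℕ) :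
    henselCoeff Q h₁ h₂ F₁ F₂ (n + 1) = bezoutSplit h₁ h₂ F₁ F₂ (coeff (n + 1) Q -
      ∑ i ∈ Finset.range n,
        (henselCoeff Q h₁ h₂ F₁ F₂ (i + 1)).1 * (henselCoeff Q h₁ h₂ F₁ F₂ (n - i)).2) := by
  rw [henselCoeff, Finset.sum_attach (Finset.range n)
    fun i => (henselCoeff Q h₁ h₂ F₁ F₂ (i + 1)).1 * (henselCoeff Q h₁ h₂ F₁ F₂ (n - i)).2]

variable {Q h₁ h₂ F₁ F₂}

theorem degree_henselCoeff_lt (hm₂ : h₂.Monic) (hbez : h₁ * F₁ + h₂ * F₂ = 1)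
    (hQ : ∀ n, 0 < n → (coeff n Q).degree < ↑(h₁.natDegree + h₂.natDegree))
    (n : ℕ) (hn : 0 < n) :
    (henselCoeff Q h₁ h₂ F₁ F₂ n).1.degree < h₁.natDegree ∧
      (henselCoeff Q h₁ h₂ F₁ F₂ n).2.degree < h₂.natDegree := by
  induction n using Nat.strong_induction_on with
  | _ n ih =>
    obtain _ | n := n
    · exact absurd hn (lt_irrefl 0)
    rw [henselCoeff_succ]
    refine ⟨degree_bezoutSplit_fst_lt hm₂ hbez (mem_degreeLT.1 ?_), degree_bezoutSplit_snd_lt hm₂ _⟩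
    refine sub_mem (mem_degreeLT.2 (hQ _ hn)) (sum_mem fun i hi => mem_degreeLT.2 ?_)
    have hi := Finset.mem_range.1 hi
    exact degree_mul_lt_of_le_of_lt (ih (i + 1) (by omega) i.succ_pos).1.le
      (ih (n - i) (by omega) (by omega)).2

theorem henselCoeff_succ_spec (hbez : h₁ * F₁ + h₂ * F₂ = 1) (n : ℕ) :
    h₁ * (henselCoeff Q h₁ h₂ F₁ F₂ (n + 1)).2 + (henselCoeff Q h₁ h₂ F₁ F₂ (n + 1)).1 * h₂ +
      ∑ i ∈ Finset.range n,
        (henselCoeff Q h₁ h₂ F₁ F₂ (i + 1)).1 * (henselCoeff Q h₁ h₂ F₁ F₂ (n - i)).2 =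
      coeff (n + 1) Q := by
  rw [henselCoeff_succ, bezoutSplit_spec hbez, sub_add_cancel]

theorem mk_henselCoeff_mul (hbez : h₁ * F₁ + h₂ * F₂ = 1) (hQ₀ : constantCoeff Q = h₁ * h₂) :
    mk (fun n => (henselCoeff Q h₁ h₂ F₁ F₂ n).1) * mk (fun n => (henselCoeff Q h₁ h₂ F₁ F₂ n).2) =
      Q := by
  ext1 n
  rw [coeff_mul, Finset.Nat.sum_antidiagonal_eq_sum_range_succ
    (fun i j => coeff i (mk fun n => (henselCoeff Q h₁ h₂ F₁ F₂ n).1) *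
      coeff j (mk fun n => (henselCoeff Q h₁ h₂ F₁ F₂ n).2))]
  simp only [coeff_mk]
  obtain _ | n := n
  · rw [Finset.sum_range_one, henselCoeff_zero, coeff_zero_eq_constantCoeff_apply, hQ₀]
  rw [Finset.sum_range_succ', Finset.sum_range_succ, Nat.sub_self, Nat.sub_zero, henselCoeff_zero]
  simp only [Nat.reduceSubDiff]
  linear_combination henselCoeff_succ_spec hbez n

end HenselCoeff

theorem exists_mul_eq_of_constantCoeff_eq_mul {Q : PowerSeries R[X]} {h₁ h₂ F₁ F₂ : R[X]}
    (hm₂ : h₂.Monic) (hbez : h₁ * F₁ + h₂ * F₂ = 1) (hQ₀ : constantCoeff Q = h₁ * h₂)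
    (hQ : ∀ n, 0 < n → (coeff n Q).degree < (constantCoeff Q).natDegree) :
    ∃ U V : PowerSeries R[X], U * V = Q ∧ constantCoeff U = h₁ ∧ constantCoeff V = h₂ ∧
      (∀ n, 0 < n → (coeff n U).degree < h₁.natDegree) ∧
      (∀ n, 0 < n → (coeff n V).degree < h₂.natDegree) := by
  have hQ' : ∀ n, 0 < n → (coeff n Q).degree < ↑(h₁.natDegree + h₂.natDegree) := fun n hn =>
    (hQ n hn).trans_le (by rw [hQ₀]; exact WithBot.coe_le_coe.2 natDegree_mul_le)
  have hdeg := degree_henselCoeff_lt (F₁ := F₁) hm₂ hbez hQ'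
  refine ⟨mk fun n => (henselCoeff Q h₁ h₂ F₁ F₂ n).1, mk fun n => (henselCoeff Q h₁ h₂ F₁ F₂ n).2,
    mk_henselCoeff_mul hbez hQ₀, ?_, ?_, fun n hn => ?_, fun n hn => ?_⟩
  · rw [← coeff_zero_eq_constantCoeff_apply, coeff_mk, henselCoeff_zero]
  · rw [← coeff_zero_eq_constantCoeff_apply, coeff_mk, henselCoeff_zero]
  · rw [coeff_mk]
    exact (hdeg n hn).1
  · rw [coeff_mk]
    exact (hdeg n hn).2

end PowerSeries

theorem hensel_lift_powerseries_factorization_general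
    {R : Type} [CommRing R]
    (P : Polynomial (PowerSeries R)) (hP : P.Monic)
    (h1 h2 : Polynomial R) (hm1 : h1.Monic) (hm2 : h2.Monic)
    (hfac : P.map (PowerSeries.constantCoeff (R := R)) = h1 * h2)
    (F1 F2 : Polynomial R) (hbez : h1 * F1 + h2 * F2 = 1) :
    ∃ H1 H2 : Polynomial (PowerSeries R),
      H1.Monic ∧ H2.Monic ∧ P = H1 * H2 ∧
      H1.map (PowerSeries.constantCoeff (R := R)) = h1 ∧
      H2.map (PowerSeries.constantCoeff (R := R)) = h2 := by
  obtain ⟨U, V, hUV, hU₀, hV₀, hU, hV⟩ :=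
    PowerSeries.exists_mul_eq_of_constantCoeff_eq_mul hm2 hbez
      (by rw [constantCoeff_swapPowerSeries, hfac]) fun _ => degree_coeff_swapPowerSeries_lt hP
  obtain ⟨H1, hH1, rfl⟩ := exists_monic_swapPowerSeries_eq (hU₀ ▸ hm1) (hU₀ ▸ hU)
  obtain ⟨H2, hH2, rfl⟩ := exists_monic_swapPowerSeries_eq (hV₀ ▸ hm2) (hV₀ ▸ hV)
  refine ⟨H1, H2, hH1, hH2, swapPowerSeries_injective (by rw [map_mul, hUV]), ?_, ?_⟩
  · rw [← constantCoeff_swapPowerSeries, hU₀]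
  · rw [← constantCoeff_swapPowerSeries, hV₀]

theorem hensel_lift_powerseries_factorization
    {R : Type} [CommRing R] (r : ℕ)
    (P : Polynomial (PowerSeries R)) (hP : P.Monic) (hdeg : P.natDegree = r)
    (h1 h2 : Polynomial R) (hm1 : h1.Monic) (hm2 : h2.Monic)
    (hfac : P.map (PowerSeries.constantCoeff (R := R)) = h1 * h2)
    (F1 F2 : Polynomial R) (hbez : h1 * F1 + h2 * F2 = 1) :
    ∃ H1 H2 : Polynomial (PowerSeries R),
      H1.Monic ∧ H2.Monic ∧ P = H1 * H2 ∧
      H1.map (PowerSeries.constantCoeff (R := R)) = h1 ∧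
      H2.map (PowerSeries.constantCoeff (R := R)) = h2 :=
  hensel_lift_powerseries_factorization_general P hP h1 h2 hm1 hm2 hfac F1 F2 hbez
end

section
/- Let E be a free ℂ[[s,t]]-module with a relative connection ∇_t : E → E ⊗ Ω¹ with poles, satisfying ∇_t(t^{k+1} s^p ∂_t)(E) ⊂ E for some k ≥ 1 and p ≥ 0. Let F_0 be the induced endomorphism of E_0 := E/tE. If F_0 is invertible, then any meromorphic flat section f = Σ_{j ≥ −N} f_j t^j of E (with f_j ∈ E_0-valued coefficients, ∇_t(t^{k+1}s^p∂_t)f = 0) is zero. -/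
/-!
In a frame, `E = ℂ[[s,t]]^n` with `ℂ[[s,t]] = (ℂ⟦s⟧)⟦t⟧`, `∇_t(t^{k+1} s^p ∂_t) = s^p t^{k+1} ∂_t + G`
and `F₀ = G mod t`; a meromorphic flat section `t^{-N} g` is encoded by `g`, for which flatness reads
`s^p (t^{k+1} ∂_t g - N t^k g) + G g = 0`.

If `g` vanishes to order `m` at `t = 0`, then so does `(t ∂_t - N) g`, so the differential part
`s^p t^k (t ∂_t - N) g` vanishes to order `m + k > m`. Hence `G g` vanishes to order `m + 1`, and
its `t^m`-coefficient `F₀ g_m` is zero; invertibility of `F₀` gives `g_m = 0`. By induction on `m`,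
every coefficient of `g` vanishes.
-/

open PowerSeries
open scoped Matrix

local notation "𝔸" => PowerSeries (PowerSeries ℂ)

namespace PowerSeries

variable {R ι : Type*} [Fintype ι]

section CommSemiring

variable [CommSemiring R]

theorem coeff_X_mul_derivative (f : R⟦X⟧) (j : ℕ) :
    coeff j (X * d⁄dX R f) = j * coeff j f := by
  cases j with
  | zero => simp
  | succ j => rw [coeff_succ_X_mul, coeff_derivative, mul_comm]; push_cast; rfl

theorem X_pow_dvd_X_mul_derivative {f : R⟦X⟧} {m : ℕ} (hf : X ^ m ∣ f) :
    X ^ m ∣ X * d⁄dX R f := by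
  rw [X_pow_dvd_iff] at hf ⊢
  intro j hj
  rw [coeff_X_mul_derivative, hf j hj, mul_zero]

theorem coeff_mulVec_of_X_pow_dvd (G : Matrix ι ι R⟦X⟧) {g : ι → R⟦X⟧} {m : ℕ}
    (hg : ∀ i, X ^ m ∣ g i) :
    (fun i ↦ coeff m ((G *ᵥ g) i)) = G.map constantCoeff *ᵥ fun i ↦ coeff m (g i) := by
  choose h hh using hg
  obtain rfl : g = fun i ↦ X ^ m * h i := funext hh
  have hGg : G *ᵥ (fun i ↦ X ^ m * h i) = (X ^ m : R⟦X⟧) • (G *ᵥ h) := by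
    rw [← Matrix.mulVec_smul]; rfl
  ext i
  simp only [hGg, Pi.smul_apply, smul_eq_mul, coeff_X_pow_mul', le_refl, if_true,
    Nat.sub_self, coeff_zero_eq_constantCoeff_apply, RingHom.map_mulVec]
  rfl

end CommSemiring

variable [CommRing R]

theorem X_pow_add_dvd_X_pow_succ_mul_derivative_sub {f : R⟦X⟧} {m : ℕ} (k N : ℕ)
    (hf : X ^ m ∣ f) :
    X ^ (m + k) ∣ X ^ (k + 1) * d⁄dX R f - (N : R⟦X⟧) * X ^ k * f := by
  have h : X ^ (k + 1) * d⁄dX R f - (N : R⟦X⟧) * X ^ k * f =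
      X ^ k * (X * d⁄dX R f - (N : R⟦X⟧) * f) := by ring
  rw [h, pow_add, mul_comm (X ^ m)]
  exact mul_dvd_mul_left _ <| dvd_sub (X_pow_dvd_X_mul_derivative hf) (hf.mul_left _)

theorem eq_zero_of_X_pow_dvd_mulVec [DecidableEq ι] (G : Matrix ι ι R⟦X⟧)
    (hG : IsUnit (G.map constantCoeff).det) {g : ι → R⟦X⟧}
    (hGg : ∀ m, (∀ i, X ^ m ∣ g i) → ∀ i, X ^ (m + 1) ∣ (G *ᵥ g) i) :
    g = 0 := by
  have hdvd : ∀ m i, X ^ m ∣ g i := by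
    intro m
    induction m with
    | zero => simp
    | succ m ih =>
      have hcoeff : (fun i ↦ coeff m (g i)) = 0 := by
        refine Matrix.eq_zero_of_det_mem_nonZeroDivisors_of_mulVec_eq_zero
          hG.mem_nonZeroDivisors ?_
        rw [← coeff_mulVec_of_X_pow_dvd G ih]
        funext i
        exact X_pow_dvd_iff.mp (hGg m ih i) m m.lt_succ_self
      intro i
      rw [X_pow_dvd_iff]
      intro j hj
      rcases Nat.lt_succ_iff_lt_or_eq.mp hj with hj | rfl
      · exact X_pow_dvd_iff.mp (ih i) j hj
      · exact congrFun hcoeff i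
  funext i
  ext m
  exact X_pow_dvd_iff.mp (hdvd (m + 1) i) m m.lt_succ_self

end PowerSeries

theorem flat_section_eq_zero_of_leading_endomorphism_isUnit
    (n k p : ℕ) (hk : 1 ≤ k)
    (G : Matrix (Fin n) (Fin n) 𝔸)
    (hF0 : IsUnit ((G.map (constantCoeff (R := PowerSeries ℂ))).det)) :
    ∀ (N : ℕ) (g : Fin n → 𝔸),
      (∀ i, (C (R := PowerSeries ℂ) X) ^ p *
          ((X : 𝔸) ^ (k + 1) * derivativeFun (g i) - (N : 𝔸) * (X : 𝔸) ^ k * g i)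
        + G.mulVec g i = 0) →
      g = 0 := by
  intro N g hflat
  refine eq_zero_of_X_pow_dvd_mulVec G hF0 fun m hm i ↦ ?_
  rw [eq_neg_of_add_eq_zero_right (hflat i), dvd_neg]
  exact (pow_dvd_pow X (by omega)).trans
    ((X_pow_add_dvd_X_pow_succ_mul_derivative_sub k N (hm i)).mul_left _)
end

section
/- In the setting of the block-decomposition lemma, assume additionally that ∇_t extends to a flat meromorphic connection ∇ : E → E ⊗ Ω¹_{ℂ[[s]]((t))/ℂ}(∗st) (i.e. including the ∂_s direction, with flatness [∇(∂_s), ∇(t^{k+1}∂_t)] = 0). Then the decomposition E = E^{(1)} ⊕ E^{(2)} obtained from ∇_t is also ∇(∂_s)-stable, i.e. flat for the full connection ∇. -/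
/-!
Statement 6 (Lemma `07.9.19.14` of the paper).

Setting of the block-decomposition lemma: `E = (ℂ[[s,t]])^{n₁+n₂}` with
`ℂ[[s,t]] = PowerSeries (PowerSeries ℂ)` (outer variable `t`), and the `∇_t`-flat
decomposition is realized in a compatible frame, so the matrix `Amat` of `∇(t^{k+1}∂_t)` is
block diagonal, `Amat = A₁ ⊕ A₂`; the eigenvalues of the two blocks of `F₀ = Amat mod t` lie
in `ℂ[[s]]` and their differences do not vanish at `s = 0`.  Assume `∇` extends to a flat
meromorphic connection including the `∂_s`-direction: in the same frame `∇(∂_s)` has matrix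
`B = t^{-N} Cm` with `Cm` over `ℂ[[s,t]]`, and flatness `[∇(∂_s), ∇(t^{k+1}∂_t)] = 0` reads
(after multiplying by `t^N`)
`Amat Cm − Cm Amat + t^{k+1} ∂_t Cm − N t^k Cm + t^N ∂_s Amat = 0`.
Then the decomposition is also `∇(∂_s)`-stable: the off-diagonal blocks of `Cm` (hence of `B`)
vanish.
-/

noncomputable section

open PowerSeries

local notation "𝔸" => PowerSeries (PowerSeries ℂ)

/-- the derivation `∂_s` on `ℂ[[s,t]] = (ℂ[[s]])[[t]]`, acting coefficientwise in `t` -/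
def dS (a : 𝔸) : 𝔸 := PowerSeries.mk fun n => derivativeFun (coeff n a)

/-!
Work order by order in `t`. After reindexing, each off-diagonal block `D` of `Cm` satisfies
`A₁ D - D A₂ + t^k (t ∂_t - N) D = 0`, the term `t^N ∂_s Amat` being block diagonal.
If `t^r ∣ D`, the `t^r`-coefficient of this equation is the Sylvester equation
`A₁(0) D_r = D_r A₂(0)`, because `k ≥ 1` pushes the other terms to order `> r`.
Then `χ_{A₂(0)}(A₁(0)) D_r = D_r χ_{A₂(0)}(A₂(0)) = 0` by Cayley–Hamilton, and
`χ_{A₂(0)}(A₁(0))` is invertible: its determinant is `± ∏ (b₂ j - b₁ i)`, a unit of `ℂ[[s]]` by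
the separation of the spectra at `s = 0`. Hence `D_r = 0`, so `t^(r+1) ∣ D`, and `D = 0`.
-/

theorem dS_zero : dS 0 = 0 := by
  ext n : 1
  simp only [dS, coeff_mk, map_zero]
  exact map_zero (d⁄dX ℂ)

namespace Matrix

open Polynomial hiding X C

variable {S : Type*} [CommRing S] {m n : Type*} [Fintype m] [DecidableEq m] [Fintype n]
  [DecidableEq n]

theorem aeval_mul_eq_mul_aeval {A : Matrix m m S} {B : Matrix n n S} {Y : Matrix m n S}
    (hY : A * Y = Y * B) (p : Polynomial S) : aeval A p * Y = Y * aeval B p := by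
  have hpow : ∀ r : ℕ, A ^ r * Y = Y * B ^ r := by
    intro r
    induction r with
    | zero => simp
    | succ r ih =>
      rw [pow_succ, pow_succ, Matrix.mul_assoc, hY, ← Matrix.mul_assoc, ih, Matrix.mul_assoc]
  induction p using Polynomial.induction_on' with
  | add p q hp hq => rw [map_add, map_add, Matrix.add_mul, Matrix.mul_add, hp, hq]
  | monomial r a =>
    simp only [aeval_monomial, Algebra.algebraMap_eq_smul_one, Matrix.smul_mul, Matrix.mul_smul,
      one_mul, hpow]

theorem det_aeval_X_sub_C (A : Matrix m m S) (b : S) :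
    (aeval A (Polynomial.X - Polynomial.C b)).det = (-1) ^ Fintype.card m * A.charpoly.eval b := by
  rw [eval_charpoly, ← det_neg, map_sub, aeval_X, aeval_C, neg_sub, algebraMap_eq_diagonal,
    scalar_apply]
  rfl

theorem isUnit_det_aeval_charpoly {A : Matrix m m S} {B : Matrix n n S} {a : m → S} {b : n → S}
    (hA : A.charpoly = ∏ i, (Polynomial.X - Polynomial.C (a i)))
    (hB : B.charpoly = ∏ j, (Polynomial.X - Polynomial.C (b j)))
    (hab : ∀ i j, IsUnit (a i - b j)) : IsUnit (aeval A B.charpoly).det := by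
  have hdet :
      (aeval A B.charpoly).det = ∏ j, (aeval A (Polynomial.X - Polynomial.C (b j))).det := by
    rw [hB]
    exact map_prod (detMonoidHom.comp (aeval A : Polynomial S →ₐ[S] Matrix m m S).toMonoidHom) _ _
  rw [hdet, IsUnit.prod_univ_iff]
  intro j
  rw [det_aeval_X_sub_C, hA, eval_prod]
  refine ((isUnit_one.neg).pow _).mul (IsUnit.prod_univ_iff.mpr fun i => ?_)
  rw [eval_sub, eval_X, eval_C, ← neg_sub]
  exact (hab i j).neg

theorem eq_zero_of_mul_eq_mul_of_charpoly {A : Matrix m m S} {B : Matrix n n S} {a : m → S}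
    {b : n → S}
    (hA : A.charpoly = ∏ i, (Polynomial.X - Polynomial.C (a i)))
    (hB : B.charpoly = ∏ j, (Polynomial.X - Polynomial.C (b j)))
    (hab : ∀ i j, IsUnit (a i - b j)) {Y : Matrix m n S} (hY : A * Y = Y * B) : Y = 0 := by
  have hkill : aeval A B.charpoly * Y = 0 := by
    rw [aeval_mul_eq_mul_aeval hY, aeval_self_charpoly, Matrix.mul_zero]
  calc Y = (aeval A B.charpoly)⁻¹ * (aeval A B.charpoly * Y) :=
        (nonsing_inv_mul_cancel_left _ Y (isUnit_det_aeval_charpoly hA hB hab)).symm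
    _ = 0 := by rw [hkill, Matrix.mul_zero]

end Matrix

namespace PowerSeries

variable {S : Type*} [CommRing S] {m k : ℕ} {ψ : S⟦X⟧}

theorem coeff_mul_of_X_pow_dvd (φ : S⟦X⟧) (h : X ^ m ∣ ψ) :
    coeff m (φ * ψ) = constantCoeff φ * coeff m ψ := by
  obtain ⟨ψ₀, rfl⟩ := h
  rw [mul_left_comm, coeff_X_pow_mul', coeff_X_pow_mul', if_pos le_rfl, if_pos le_rfl, Nat.sub_self,
    coeff_zero_eq_constantCoeff_apply, coeff_zero_eq_constantCoeff_apply, map_mul]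

theorem coeff_X_pow_mul_derivative_of_X_pow_dvd (hk : 1 ≤ k) (h : X ^ m ∣ ψ) :
    coeff m (X ^ (k + 1) * d⁄dX S ψ) = 0 := by
  rw [coeff_X_pow_mul']
  split_ifs with hkm
  · rw [coeff_derivative, X_pow_dvd_iff.mp h _ (by omega), zero_mul]
  · rfl

theorem coeff_mul_X_pow_mul_of_X_pow_dvd (c : S⟦X⟧) (hk : 1 ≤ k) (h : X ^ m ∣ ψ) :
    coeff m (c * X ^ k * ψ) = 0 := by
  have hdvd : X ^ (k + m) ∣ c * X ^ k * ψ :=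
    pow_add (X : S⟦X⟧) k m ▸ mul_dvd_mul (dvd_mul_left _ c) h
  exact X_pow_dvd_iff.mp hdvd m (by omega)

end PowerSeries

namespace Matrix

variable {S : Type*} [CommRing S] {l m n : Type*} [Fintype m] {r : ℕ}

theorem map_coeff_mul_of_X_pow_dvd (A : Matrix l m S⟦X⟧) {D : Matrix m n S⟦X⟧}
    (hD : ∀ i j, X ^ r ∣ D i j) :
    (A * D).map (coeff r) = A.map constantCoeff * D.map (coeff r) := by
  ext i j
  simp only [map_apply, mul_apply, map_sum, coeff_mul_of_X_pow_dvd _ (hD _ j)]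

theorem map_coeff_mul_of_X_pow_dvd_left {D : Matrix l m S⟦X⟧} (A : Matrix m n S⟦X⟧)
    (hD : ∀ i j, X ^ r ∣ D i j) :
    (D * A).map (coeff r) = D.map (coeff r) * A.map constantCoeff := by
  ext i j
  simp only [map_apply, mul_apply, map_sum, mul_comm (D i _), coeff_mul_of_X_pow_dvd _ (hD i _)]
  exact Finset.sum_congr rfl fun _ _ => mul_comm _ _

variable [Fintype n] {k : ℕ} {A₁ : Matrix m m S⟦X⟧} {A₂ : Matrix n n S⟦X⟧} {c : S⟦X⟧}
  {D : Matrix m n S⟦X⟧}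

theorem X_pow_succ_dvd_of_flat_offDiagonal (hk : 1 ≤ k)
    (hsyl : ∀ Y : Matrix m n S, A₁.map constantCoeff * Y = Y * A₂.map constantCoeff → Y = 0)
    (hD : A₁ * D - D * A₂ + (X ^ (k + 1) : S⟦X⟧) • D.map (d⁄dX S) - (c * X ^ k) • D = 0)
    (hdvd : ∀ i j, X ^ r ∣ D i j) (i : m) (j : n) : X ^ (r + 1) ∣ D i j := by
  have hcomm :
      A₁.map constantCoeff * D.map (coeff r) = D.map (coeff r) * A₂.map constantCoeff := by
    rw [← map_coeff_mul_of_X_pow_dvd A₁ hdvd, ← map_coeff_mul_of_X_pow_dvd_left A₂ hdvd,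
      ← sub_eq_zero]
    ext i j
    have := congrArg (coeff r) (congrFun (congrFun hD i) j)
    simp only [sub_apply, add_apply, smul_apply, smul_eq_mul, map_apply, zero_apply, map_sub,
      map_add, map_zero, coeff_X_pow_mul_derivative_of_X_pow_dvd hk (hdvd i j),
      coeff_mul_X_pow_mul_of_X_pow_dvd c hk (hdvd i j), add_zero, sub_zero] at this
    simpa only [sub_apply, map_apply, zero_apply, map_sub] using this
  have hr : coeff r (D i j) = 0 := congrFun (congrFun (hsyl _ hcomm) i) j
  refine X_pow_dvd_iff.mpr fun q hq => ?_
  rcases Nat.lt_succ_iff_lt_or_eq.mp hq with hq | rfl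
  · exact X_pow_dvd_iff.mp (hdvd i j) q hq
  · exact hr

theorem eq_zero_of_flat_offDiagonal (hk : 1 ≤ k)
    (hsyl : ∀ Y : Matrix m n S, A₁.map constantCoeff * Y = Y * A₂.map constantCoeff → Y = 0)
    (hD : A₁ * D - D * A₂ + (X ^ (k + 1) : S⟦X⟧) • D.map (d⁄dX S) - (c * X ^ k) • D = 0) :
    D = 0 := by
  have hdvd : ∀ r i j, X ^ r ∣ D i j := by
    intro r
    induction r with
    | zero => simp
    | succ r ih => exact X_pow_succ_dvd_of_flat_offDiagonal hk hsyl hD ih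
  ext i j r
  exact X_pow_dvd_iff.mp (hdvd (r + 1) i j) r r.lt_succ_self

end Matrix

namespace Matrix

variable {R : Type*} [CommRing R] {ι κ : Type*} [Fintype ι] [Fintype κ]

theorem offDiagonal_flat_of_fromBlocks_diagonal {A₁ : Matrix ι ι R} {A₂ : Matrix κ κ R}
    {C : Matrix (ι ⊕ κ) (ι ⊕ κ) R} {δ f : R → R} (hf : f 0 = 0) {u v w : R}
    (h : fromBlocks A₁ 0 0 A₂ * C - C * fromBlocks A₁ 0 0 A₂ + u • C.map δ - v • C
      + w • (fromBlocks A₁ 0 0 A₂).map f = 0) :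
    A₁ * C.toBlocks₁₂ - C.toBlocks₁₂ * A₂ + u • C.toBlocks₁₂.map δ - v • C.toBlocks₁₂ = 0 ∧
      A₂ * C.toBlocks₂₁ - C.toBlocks₂₁ * A₁ + u • C.toBlocks₂₁.map δ - v • C.toBlocks₂₁ = 0 := by
  rw [← fromBlocks_toBlocks C] at h
  simp only [fromBlocks_multiply, fromBlocks_map, fromBlocks_smul, sub_eq_add_neg, fromBlocks_neg,
    fromBlocks_add, Matrix.map_zero f hf, ← fromBlocks_zero, fromBlocks_inj, Matrix.zero_mul,
    Matrix.mul_zero, smul_zero, add_zero, zero_add] at h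
  simp only [sub_eq_add_neg]
  exact ⟨h.2.1, h.2.2.1⟩

end Matrix

theorem flat_decomposition_is_ds_stable
    (n₁ n₂ k N : ℕ) (hk : 1 ≤ k)
    (A₁ : Matrix (Fin n₁) (Fin n₁) 𝔸) (A₂ : Matrix (Fin n₂) (Fin n₂) 𝔸)
    (Amat : Matrix (Fin (n₁ + n₂)) (Fin (n₁ + n₂)) 𝔸)
    (hAblock : Amat = Matrix.reindex finSumFinEquiv finSumFinEquiv
      (Matrix.fromBlocks A₁ 0 0 A₂))
    (b₁ : Fin n₁ → PowerSeries ℂ) (b₂ : Fin n₂ → PowerSeries ℂ)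
    (hchar₁ : (A₁.map (constantCoeff : 𝔸 →+* PowerSeries ℂ)).charpoly
      = ∏ i, (Polynomial.X - Polynomial.C (b₁ i)))
    (hchar₂ : (A₂.map (constantCoeff : 𝔸 →+* PowerSeries ℂ)).charpoly
      = ∏ j, (Polynomial.X - Polynomial.C (b₂ j)))
    (hsep : ∀ i j, constantCoeff (b₁ i - b₂ j) ≠ 0)
    (Cm : Matrix (Fin (n₁ + n₂)) (Fin (n₁ + n₂)) 𝔸)
    (hflat : Amat * Cm - Cm * Amat
        + ((X : 𝔸) ^ (k + 1)) • Cm.map derivativeFun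
        - ((N : 𝔸) * (X : 𝔸) ^ k) • Cm
        + ((X : 𝔸) ^ N) • Amat.map dS = 0) :
    ∀ (i : Fin n₁) (j : Fin n₂),
      Cm (finSumFinEquiv (Sum.inl i)) (finSumFinEquiv (Sum.inr j)) = 0 ∧
      Cm (finSumFinEquiv (Sum.inr j)) (finSumFinEquiv (Sum.inl i)) = 0 := by
  have hblocks : Amat.submatrix finSumFinEquiv finSumFinEquiv = Matrix.fromBlocks A₁ 0 0 A₂ := by
    simp [hAblock]
  have hflat' := congrArg (·.submatrix finSumFinEquiv finSumFinEquiv) hflat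
  simp only [Matrix.submatrix_add, Matrix.submatrix_sub, Matrix.submatrix_smul,
    Matrix.submatrix_map, Matrix.submatrix_zero, Pi.add_apply, Pi.sub_apply, Pi.smul_apply,
    Pi.zero_apply, ← Matrix.submatrix_mul_equiv _ _ _ finSumFinEquiv, hblocks] at hflat'
  obtain ⟨h₁₂, h₂₁⟩ := Matrix.offDiagonal_flat_of_fromBlocks_diagonal dS_zero hflat'
  have hunit : ∀ i j, IsUnit (b₁ i - b₂ j) := fun i j =>
    isUnit_iff_constantCoeff.mpr (hsep i j).isUnit
  have hD₁₂ := Matrix.eq_zero_of_flat_offDiagonal hk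
    (fun _ => Matrix.eq_zero_of_mul_eq_mul_of_charpoly hchar₁ hchar₂ hunit) h₁₂
  have hD₂₁ := Matrix.eq_zero_of_flat_offDiagonal hk
    (fun _ => Matrix.eq_zero_of_mul_eq_mul_of_charpoly hchar₂ hchar₁
      fun j i => by rw [← neg_sub]; exact (hunit i j).neg) h₂₁
  exact fun i j => ⟨congrFun (congrFun hD₁₂ i) j, congrFun (congrFun hD₂₁ j) i⟩
end
end

section
/- Let A_0 ∈ M_r(ℂ[[s]]) and let B = Σ_{j ≥ −N} B_j t^j ∈ M_r(ℂ[[s]]((t))) satisfy the equation A_0 B − B A_0 + t∂_t B = −C for some C ∈ M_r(ℂ[[s]][[t]]), where A_0 is such that α − β ∉ ℤ∖{0} for any two distinct eigenvalues α, β of A_0(0). Then N ≤ 0, i.e., B ∈ M_r(ℂ[[s,t]]). -/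
/-!
Fix `j < 0` and put `X = B j`. The equation says `(A₀ + j) X = X A₀`, hence `p(A₀ + j) X = X p(A₀)`
for every polynomial `p`, and Cayley–Hamilton for `p = χ_{A₀}` gives `χ_{A₀}(A₀ + j) X = 0`.
A matrix over `ℂ[[s]]` is invertible as soon as its value at `s = 0` is, and that value is
`χ(A₀(0) + j)` with `χ` the characteristic polynomial of `A₀(0)`. By spectral mapping its
eigenvalues are the `χ(λ + j)` with `λ` an eigenvalue of `A₀(0)`, and non-resonance says that
`λ + j` is never an eigenvalue, so they are all nonzero and `X = 0`.
-/

open Polynomial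

theorem SemiconjBy.aeval {R A : Type*} [CommSemiring R] [Semiring A] [Algebra R A] {x a b : A}
    (h : SemiconjBy x a b) (p : R[X]) : SemiconjBy x (aeval a p) (aeval b p) := by
  induction p using Polynomial.induction_on' with
  | add p q hp hq => simpa only [map_add] using hp.add_right hq
  | monomial k c =>
    have hc : SemiconjBy x (algebraMap R A c) (algebraMap R A c) := (Algebra.commutes c x).symm
    simpa only [aeval_monomial] using hc.mul_right (h.pow_right k)

namespace Matrix

variable {n : Type*} [Fintype n] [DecidableEq n]

theorem eq_zero_of_mul_eq_mul_of_isUnit_aeval_charpoly {R : Type*} [CommRing R]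
    {M A X : Matrix n n R} (hX : M * X = X * A) (hU : IsUnit (aeval M A.charpoly)) : X = 0 := by
  rw [← hU.mul_right_eq_zero, ← (SemiconjBy.aeval hX.symm A.charpoly).eq, aeval_self_charpoly,
    mul_zero]

theorem isUnit_aeval_charpoly_of_disjoint_spectrum {K : Type*} [Field K] [IsAlgClosed K]
    (M A : Matrix n n K) (h : Disjoint (spectrum K M) (spectrum K A)) :
    IsUnit (aeval M A.charpoly) := by
  nontriviality Matrix n n K
  by_contra hU
  rw [← spectrum.zero_mem_iff K, spectrum.map_polynomial_aeval_of_nonempty _ _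
    (spectrum.nonempty_of_isAlgClosed_of_finiteDimensional K M)] at hU
  obtain ⟨μ, hμM, hμA⟩ := hU
  exact h.ne_of_mem hμM (mem_spectrum_iff_isRoot_charpoly.mpr hμA) rfl

theorem isUnit_of_isUnit_map {R S : Type*} [CommRing R] [CommRing S] (f : R →+* S) [IsLocalHom f]
    {M : Matrix n n R} (h : IsUnit (M.map f)) : IsUnit M := by
  rw [isUnit_iff_isUnit_det, ← RingHom.mapMatrix_apply, ← RingHom.map_det] at h
  exact isUnit_iff_isUnit_det M |>.mpr ((isUnit_map_iff f _).mp h)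

theorem map_aeval {R S : Type*} [CommRing R] [CommRing S] (f : R →+* S) (M : Matrix n n R)
    (p : R[X]) : (aeval M p).map f = aeval (M.map f) (p.map f) :=
  map_aeval_eq_aeval_map (ψ := f.mapMatrix)
    (by ext; simp [algebraMap_matrix_apply, apply_ite f]) p M

theorem disjoint_spectrum_add_zsmul_one {K : Type*} [Field K] [CharZero K] (A : Matrix n n K)
    (hres : ∀ α β : K, A.charpoly.IsRoot α → A.charpoly.IsRoot β →
      α ≠ β → ∀ m : ℤ, m ≠ 0 → α - β ≠ (m : K))
    {j : ℤ} (hj : j ≠ 0) : Disjoint (spectrum K (A + j • 1)) (spectrum K A) := by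
  rw [← Int.cast_smul_eq_zsmul K, ← Algebra.algebraMap_eq_smul_one, ← spectrum.add_singleton_eq,
    Set.disjoint_left]
  rintro _ ⟨μ, hμ, _, rfl, rfl⟩ hμj
  rw [mem_spectrum_iff_isRoot_charpoly] at hμ hμj
  exact hres (μ + j) μ hμj hμ (by simpa using hj) j hj (by ring)

end Matrix

instance PowerSeries.isLocalHom_constantCoeff {R : Type*} [CommRing R] :
    IsLocalHom (PowerSeries.constantCoeff (R := R)) :=
  ⟨fun _ h => PowerSeries.isUnit_iff_constantCoeff.mpr h⟩

theorem laurent_solution_is_regular_of_nonresonant_general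
    (r : ℕ) (A0 : Matrix (Fin r) (Fin r) (PowerSeries ℂ))
    (hres : ∀ α β : ℂ,
      ((A0.map (PowerSeries.constantCoeff (R := ℂ))).charpoly.IsRoot α) →
      ((A0.map (PowerSeries.constantCoeff (R := ℂ))).charpoly.IsRoot β) →
      α ≠ β → ∀ n : ℤ, n ≠ 0 → α - β ≠ (n : ℂ))
    (B : ℤ → Matrix (Fin r) (Fin r) (PowerSeries ℂ))
    (heq : ∀ j : ℤ, j < 0 → A0 * B j - B j * A0 + (j : ℤ) • B j = 0) :
    ∀ j : ℤ, j < 0 → B j = 0 := by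
  intro j hj
  have hintertwine : (A0 + j • 1) * B j = B j * A0 := by
    rw [← sub_eq_zero, ← heq j hj, add_mul, smul_mul_assoc, one_mul]
    abel
  refine Matrix.eq_zero_of_mul_eq_mul_of_isUnit_aeval_charpoly hintertwine
    (Matrix.isUnit_of_isUnit_map PowerSeries.constantCoeff ?_)
  rw [Matrix.map_aeval, ← Matrix.charpoly_map, ← RingHom.mapMatrix_apply, map_add, map_zsmul,
    map_one, RingHom.mapMatrix_apply]
  exact Matrix.isUnit_aeval_charpoly_of_disjoint_spectrum _ _
    (Matrix.disjoint_spectrum_add_zsmul_one _ hres hj.ne)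

theorem laurent_solution_is_regular_of_nonresonant
    (r : ℕ) (A0 : Matrix (Fin r) (Fin r) (PowerSeries ℂ))
    (hres : ∀ α β : ℂ,
      ((A0.map (PowerSeries.constantCoeff (R := ℂ))).charpoly.IsRoot α) →
      ((A0.map (PowerSeries.constantCoeff (R := ℂ))).charpoly.IsRoot β) →
      α ≠ β → ∀ n : ℤ, n ≠ 0 → α - β ≠ (n : ℂ))
    (B : ℤ → Matrix (Fin r) (Fin r) (PowerSeries ℂ))
    (N : ℕ) (hsupp : ∀ j : ℤ, j < -(N : ℤ) → B j = 0)
    (heq : ∀ j : ℤ, j < 0 → A0 * B j - B j * A0 + (j : ℤ) • B j = 0) :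
    ∀ j : ℤ, j < 0 → B j = 0 :=
  laurent_solution_is_regular_of_nonresonant_general r A0 hres B heq
end

section
/- Let k be a field of characteristic 0 and E a free k[[t]]-module with logarithmic connection ∇ whose residue Res_E(∇) has eigenvalue set S. Define a partial order on S by α < β iff β − α ∈ ℤ_{>0}, and set ρ(E) := max{β − α : α ≤ β in S} (a non-negative integer). If ρ(E) > 0, let V ⊂ E_0 be the k-subspace corresponding to the sum of generalized eigenspaces of eigenvalues β ∈ S that are maximal and dominate some α < β, let E^{(1)} = t^{-1}E, identify E^{(1)}_0 ≅ E_0, and let E^{(2)} = ker(E^{(1)} → E^{(1)}_0/V^{(1)}). Then ∇ is logarithmic on E^{(2)} and ρ(E^{(2)}) ≤ ρ(E) − 1. -/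
/-!
Let `V` be the span of the coordinate vectors `eᵢ` with `i < m`. As a sum of generalized
eigenspaces, `V` is stable under the residue `A₀`, so `A₀` is block upper triangular. In
particular the entries of `A` in the block below `V` vanish at `t = 0`, which is exactly what is
needed to divide them by `t`: `∇` stays logarithmic on `E⁽²⁾`. The new residue is block lower
triangular with diagonal blocks `A₀|_V - 1` and `A₀|_{E₀/V}`. The eigenvalues of `A₀|_V` lie in
`S₀` by independence of generalized eigenspaces, and those of `A₀|_{E₀/V}` lie in `S \ S₀`: a left
eigenvector for an eigenvalue in `S₀` would vanish on every generalized eigenspace. So the new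
eigenvalues are those of `S₀ - 1` and of `S \ S₀`, and comparing them case by case shows that the
difference `ρ` no longer occurs.
-/

namespace Module.End

variable {K V : Type*} [Field K] [AddCommGroup V] [Module K V] {f : End K V}

theorem mem_of_hasEigenvector_of_mem_biSup {T : Set K} {μ : K} {x : V}
    (hx : f.HasEigenvector μ x) (hxT : x ∈ ⨆ β ∈ T, f.maxGenEigenspace β) : μ ∈ T := by
  by_contra hμ
  exact hx.2 <| Submodule.disjoint_def.mp (f.independent_maxGenEigenspace.disjoint_biSup hμ) x
    (eigenspace_le_maxGenEigenspace hx.1) hxT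

theorem comp_pow_sub_smul_one {φ : V →ₗ[K] K} {μ : K} (hφ : φ ∘ₗ f = μ • φ) (β : K) (N : ℕ) :
    φ ∘ₗ (f - β • 1) ^ N = (μ - β) ^ N • φ := by
  induction N with
  | zero => rw [pow_zero, pow_zero, one_smul, one_eq_id, LinearMap.comp_id]
  | succ N ih =>
    rw [pow_succ, mul_eq_comp, ← LinearMap.comp_assoc, ih, LinearMap.smul_comp,
      LinearMap.comp_sub, hφ, LinearMap.comp_smul, one_eq_id, LinearMap.comp_id]
    module

theorem apply_eq_zero_of_comp_eq_smul {φ : V →ₗ[K] K} {μ β : K} (hφ : φ ∘ₗ f = μ • φ)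
    (hβ : β ≠ μ) {z : V} (hz : z ∈ f.maxGenEigenspace β) : φ z = 0 := by
  obtain ⟨N, hN⟩ := (f.mem_maxGenEigenspace β z).mp hz
  have h := congr($(comp_pow_sub_smul_one hφ β N) z)
  rw [LinearMap.comp_apply, hN, map_zero, LinearMap.smul_apply, eq_comm] at h
  exact (smul_eq_zero.mp h).resolve_left (pow_ne_zero _ (sub_ne_zero.mpr hβ.symm))

theorem eq_zero_of_comp_eq_smul [IsAlgClosed K] [FiniteDimensional K V] {φ : V →ₗ[K] K} {μ : K}
    (hφ : φ ∘ₗ f = μ • φ) (hμ : f.maxGenEigenspace μ ≤ LinearMap.ker φ) : φ = 0 := by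
  refine LinearMap.ker_eq_top.mp (top_le_iff.mp ?_)
  rw [← f.iSup_maxGenEigenspace_eq_top]
  refine iSup_le fun β => ?_
  obtain rfl | hβ := eq_or_ne β μ
  · exact hμ
  · exact fun z hz => apply_eq_zero_of_comp_eq_smul hφ hβ hz

end Module.End

namespace Matrix

section Block

variable {R : Type*} [CommRing R] {n : Type*} (p : n → Prop) [DecidablePred p]

def extendByZero (x : {i // p i} → R) : n → R := fun i => if h : p i then x ⟨i, h⟩ else 0

variable {p}

theorem extendByZero_apply_of_pos (x : {i // p i} → R) (i : {i // p i}) :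
    extendByZero p x i = x i := dif_pos i.2

theorem extendByZero_apply_of_neg (x : {i // p i} → R) {i : n} (hi : ¬p i) :
    extendByZero p x i = 0 := dif_neg hi

theorem extendByZero_ne_zero {x : {i // p i} → R} (hx : x ≠ 0) : extendByZero p x ≠ 0 := by
  contrapose! hx
  ext i
  rw [← extendByZero_apply_of_pos x i, hx, Pi.zero_apply, Pi.zero_apply]

theorem extendByZero_smul (c : R) (x : {i // p i} → R) :
    extendByZero p (c • x) = c • extendByZero p x := by
  ext i
  by_cases hi : p i
  · simp only [extendByZero_apply_of_pos _ ⟨i, hi⟩, Pi.smul_apply]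
  · simp only [extendByZero_apply_of_neg _ hi, Pi.smul_apply, smul_zero]

variable [Fintype n]

theorem dotProduct_extendByZero (v : n → R) (x : {i // p i} → R) :
    v ⬝ᵥ extendByZero p x = ∑ j : {j // p j}, v j * x j := by
  rw [dotProduct, ← Fintype.sum_subtype_add_sum_subtype p]
  simp only [extendByZero_apply_of_pos, add_eq_left]
  exact Finset.sum_eq_zero fun j _ => by rw [extendByZero_apply_of_neg _ j.2, mul_zero]

variable {M : Matrix n n R}

theorem mulVec_extendByZero (h : ∀ i, ¬p i → ∀ j, p j → M i j = 0) (x : {i // p i} → R) :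
    M *ᵥ extendByZero p x = extendByZero p (M.toSquareBlockProp p *ᵥ x) := by
  ext i
  rw [mulVec, dotProduct_extendByZero]
  by_cases hi : p i
  · rw [extendByZero_apply_of_pos _ ⟨i, hi⟩]; rfl
  · rw [extendByZero_apply_of_neg _ hi]
    exact Finset.sum_eq_zero fun j _ => by rw [h i hi j j.2, zero_mul]

theorem extendByZero_vecMul (h : ∀ i, p i → ∀ j, ¬p j → M i j = 0) (x : {i // p i} → R) :
    extendByZero p x ᵥ* M = extendByZero p (x ᵥ* M.toSquareBlockProp p) := by
  rw [← mulVec_transpose, mulVec_extendByZero (M := Mᵀ) fun i hi j hj => h j hj i hi,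
    ← mulVec_transpose]
  rfl

variable [DecidableEq n]

variable (M) in
theorem charmatrix_toSquareBlockProp :
    (M.toSquareBlockProp p).charmatrix = M.charmatrix.toSquareBlockProp p := by
  ext i j : 1
  simp [charmatrix_apply, toSquareBlockProp_def, diagonal_apply, Subtype.ext_iff]

theorem charpoly_eq_mul_of_twoBlockTriangular (h : ∀ i, ¬p i → ∀ j, p j → M i j = 0) :
    M.charpoly =
      (M.toSquareBlockProp p).charpoly * (M.toSquareBlockProp fun i => ¬p i).charpoly := by
  simp only [charpoly, charmatrix_toSquareBlockProp]
  refine twoBlockTriangular_det _ p fun i hi j hj => ?_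
  have hij : i ≠ j := by rintro rfl; exact hi hj
  simp [charmatrix_apply_ne _ _ _ hij, h i hi j hj]

theorem charpoly_eq_mul_of_twoBlockTriangular' (h : ∀ i, p i → ∀ j, ¬p j → M i j = 0) :
    M.charpoly =
      (M.toSquareBlockProp p).charpoly * (M.toSquareBlockProp fun i => ¬p i).charpoly := by
  simp only [charpoly, charmatrix_toSquareBlockProp]
  refine twoBlockTriangular_det' _ p fun i hi j hj => ?_
  have hij : i ≠ j := by rintro rfl; exact hj hi
  simp [charmatrix_apply_ne _ _ _ hij, h i hi j hj]

variable (M) in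
theorem isRoot_charpoly_sub_one_iff {μ : R} :
    (M - 1).charpoly.IsRoot μ ↔ M.charpoly.IsRoot (μ + 1) := by
  simp only [Polynomial.IsRoot, eval_charpoly, map_add, map_one, sub_sub_eq_add_sub]

end Block

section Spectrum

open Module.End

variable {K : Type*} [Field K] {n : Type*} [Fintype n] [DecidableEq n]
  {p : n → Prop} {A : Matrix n n K} {T : Set K}

theorem exists_mulVec_eq_smul_of_isRoot_charpoly {M : Matrix n n K} {μ : K}
    (h : M.charpoly.IsRoot μ) : ∃ x ≠ 0, M *ᵥ x = μ • x := by
  rw [← charpoly_toLin', ← Module.End.hasEigenvalue_iff_isRoot_charpoly] at h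
  obtain ⟨x, hx⟩ := h.exists_hasEigenvector
  exact ⟨x, hx.2, by simpa using hx.apply_eq_smul⟩

theorem apply_eq_zero_of_biSup_maxGenEigenspace
    (hV : ∀ x, x ∈ ⨆ β ∈ T, maxGenEigenspace (toLin' A) β ↔ ∀ i, ¬p i → x i = 0) :
    ∀ i, ¬p i → ∀ j, p j → A i j = 0 := by
  intro i hi j hj
  have hinv : ⨆ β ∈ T, maxGenEigenspace (toLin' A) β ≤
      (⨆ β ∈ T, maxGenEigenspace (toLin' A) β).comap (toLin' A) :=
    iSup₂_le fun β hβ x hx => le_iSup₂ (f := fun β (_ : β ∈ T) => maxGenEigenspace (toLin' A) β)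
      β hβ (Module.End.mapsTo_maxGenEigenspace_of_comm (Commute.refl _) β hx)
  have hej : Pi.single j 1 ∈ ⨆ β ∈ T, maxGenEigenspace (toLin' A) β :=
    (hV _).mpr fun i' hi' => Pi.single_eq_of_ne (by rintro rfl; exact hi' hj) _
  simpa [mulVec_single_one] using (hV _).mp (hinv hej) i hi

variable [DecidablePred p]

theorem mem_of_isRoot_charpoly_toSquareBlockProp
    (hV : ∀ x, x ∈ ⨆ β ∈ T, maxGenEigenspace (toLin' A) β ↔ ∀ i, ¬p i → x i = 0) {μ : K}
    (hμ : (A.toSquareBlockProp p).charpoly.IsRoot μ) : μ ∈ T := by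
  obtain ⟨x, hx0, hx⟩ := exists_mulVec_eq_smul_of_isRoot_charpoly hμ
  refine Module.End.mem_of_hasEigenvector_of_mem_biSup (x := extendByZero p x)
    ⟨?_, extendByZero_ne_zero hx0⟩ ((hV _).mpr fun i hi => extendByZero_apply_of_neg x hi)
  rw [Module.End.mem_eigenspace_iff, toLin'_apply,
    mulVec_extendByZero (apply_eq_zero_of_biSup_maxGenEigenspace hV), hx, extendByZero_smul]

theorem notMem_of_isRoot_charpoly_toSquareBlockProp_not [IsAlgClosed K]
    (hV : ∀ x, x ∈ ⨆ β ∈ T, maxGenEigenspace (toLin' A) β ↔ ∀ i, ¬p i → x i = 0) {μ : K}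
    (hμ : (A.toSquareBlockProp fun i => ¬p i).charpoly.IsRoot μ) : μ ∉ T := by
  intro hμT
  rw [← charpoly_transpose] at hμ
  obtain ⟨w, hw0, hw⟩ := exists_mulVec_eq_smul_of_isRoot_charpoly hμ
  rw [mulVec_transpose] at hw
  have hA := apply_eq_zero_of_biSup_maxGenEigenspace hV
  set y := extendByZero (fun i => ¬p i) w
  have hy : y ᵥ* A = μ • y := by
    rw [extendByZero_vecMul fun i hi j hj => hA i hi j (not_not.mp hj), hw, extendByZero_smul]
  have hφ : dotProductEquiv K n y ∘ₗ toLin' A = μ • dotProductEquiv K n y := by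
    refine LinearMap.ext fun z => ?_
    simp only [LinearMap.comp_apply, toLin'_apply, dotProductEquiv_apply_apply,
      LinearMap.smul_apply, dotProduct_mulVec, hy, smul_dotProduct, smul_eq_mul]
  have hker : maxGenEigenspace (toLin' A) μ ≤ LinearMap.ker (dotProductEquiv K n y) := by
    intro z hz
    have hz0 := (hV z).mp (le_iSup₂ (f := fun β (_ : β ∈ T) => maxGenEigenspace (toLin' A) β)
      μ hμT hz)
    rw [LinearMap.mem_ker, dotProductEquiv_apply_apply, dotProduct_comm, dotProduct_extendByZero]
    exact Finset.sum_eq_zero fun j _ => by rw [hz0 j j.2, zero_mul]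
  have hy0 : y = 0 := (dotProductEquiv K n).map_eq_zero_iff.mp
    (Module.End.eq_zero_of_comp_eq_smul hφ hker)
  exact extendByZero_ne_zero hw0 hy0

end Spectrum

section HeckeModification

open PowerSeries

variable {R : Type*} [CommRing R] {n : Type*} [DecidableEq n]
  {p : n → Prop} [DecidablePred p]

variable (p) in
/-- The matrix of `t∇(∂_t)` in the frame `t⁻¹eᵢ` (`p i`), `eᵢ` (`¬p i`). The entries of the block
`(¬p, p)` are divided by `t`, which is legitimate when their constant terms vanish. -/
noncomputable def heckeModification (A : Matrix n n R⟦X⟧) : Matrix n n R⟦X⟧ :=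
  Matrix.of fun i j =>
    if p i then (if p j then A i j - (1 : Matrix n n R⟦X⟧) i j else X * A i j)
    else (if p j then mk fun d => coeff (d + 1) (A i j) else A i j)

theorem map_ofPowerSeries_heckeModification {A : Matrix n n R⟦X⟧}
    (hA : ∀ i, ¬p i → ∀ j, p j → constantCoeff (A i j) = 0) :
    (heckeModification p A).map (HahnSeries.ofPowerSeries ℤ R) = fun i j =>
      (if p i then HahnSeries.single 1 1 else 1) * HahnSeries.ofPowerSeries ℤ R (A i j) *
        (if p j then HahnSeries.single (-1) 1 else 1) + (if i = j ∧ p i then -1 else 0) := by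
  have ht : HahnSeries.single (1 : ℤ) (1 : R) * HahnSeries.single (-1) 1 = 1 := by
    rw [HahnSeries.single_mul_single, one_mul, add_neg_cancel, HahnSeries.single_zero_one]
  ext i j
  simp only [heckeModification, Matrix.map_apply, Matrix.of_apply]
  by_cases hi : p i <;> by_cases hj : p j
  · rw [if_pos hi, if_pos hj, if_pos hi, if_pos hj, mul_right_comm, ht, one_mul, map_sub,
      Matrix.one_apply, sub_eq_add_neg]
    by_cases hij : i = j
    · rw [if_pos hij, if_pos ⟨hij, hi⟩, map_one]
    · rw [if_neg hij, if_neg (by tauto), map_zero, neg_zero]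
  · rw [if_pos hi, if_neg hj, if_pos hi, if_neg hj, if_neg (by rintro ⟨rfl, -⟩; exact hj hi),
      map_mul, HahnSeries.ofPowerSeries_X, mul_one, add_zero]
  · have hX := eq_X_mul_shift_add_const (A i j)
    rw [hA i hi j hj, map_zero, add_zero] at hX
    rw [if_neg hi, if_pos hj, if_neg hi, if_pos hj, if_neg (by rintro ⟨rfl, h⟩; exact hi h),
      one_mul, add_zero]
    conv_rhs => rw [hX, map_mul, HahnSeries.ofPowerSeries_X, mul_right_comm, ht, one_mul]
  · rw [if_neg hi, if_neg hj, if_neg hi, if_neg hj, if_neg (by rintro ⟨rfl, h⟩; exact hi h),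
      one_mul, mul_one, add_zero]

variable (K : Type*) [Field K] [Algebra R K]

noncomputable def residue (A : Matrix n n R⟦X⟧) : Matrix n n K :=
  (A.map constantCoeff).map (algebraMap R K)

variable {A : Matrix n n R⟦X⟧}

theorem toSquareBlockProp_residue_heckeModification :
    (residue K (heckeModification p A)).toSquareBlockProp p =
      (residue K A).toSquareBlockProp p - 1 := by
  ext i j
  simp only [residue, heckeModification, Matrix.toSquareBlockProp_def, Matrix.map_apply,
    Matrix.of_apply, if_pos i.2, if_pos j.2, map_sub, Matrix.sub_apply, Matrix.one_apply,
    Subtype.ext_iff]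
  split_ifs <;> simp

theorem residue_heckeModification_of_pos_of_neg {i j : n} (hi : p i) (hj : ¬p j) :
    residue K (heckeModification p A) i j = 0 := by
  simp [residue, heckeModification, hi, hj]

theorem toSquareBlockProp_not_residue_heckeModification :
    (residue K (heckeModification p A)).toSquareBlockProp (fun i => ¬p i) =
      (residue K A).toSquareBlockProp fun i => ¬p i := by
  ext i j
  simp [residue, heckeModification, Matrix.toSquareBlockProp_def, i.2, j.2]

variable [Fintype n]

theorem isRoot_charpoly_residue_heckeModification {μ : K}
    (hμ : (residue K (heckeModification p A)).charpoly.IsRoot μ) :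
    ((residue K A).toSquareBlockProp p).charpoly.IsRoot (μ + 1) ∨
      ((residue K A).toSquareBlockProp fun i => ¬p i).charpoly.IsRoot μ := by
  rwa [charpoly_eq_mul_of_twoBlockTriangular' (p := p) fun i hi j hj =>
      residue_heckeModification_of_pos_of_neg K hi hj, Polynomial.root_mul,
    toSquareBlockProp_residue_heckeModification, toSquareBlockProp_not_residue_heckeModification,
    isRoot_charpoly_sub_one_iff] at hμ

end HeckeModification

end Matrix

namespace Set

variable {K : Type*} [AddCommGroupWithOne K]

def maximalDominating (S : Set K) : Set K :=
  {β ∈ S | (∃ α ∈ S, ∃ n : ℕ, 0 < n ∧ β - α = (n : K)) ∧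
    (∀ γ ∈ S, ∀ n : ℕ, 0 < n → γ - β ≠ (n : K))}

theorem natCast_le_sub_one_of_shift_maximalDominating {S : Set K} {ρ : ℕ}
    (hρ : ∀ α ∈ S, ∀ β ∈ S, ∀ n : ℕ, β - α = (n : K) → n ≤ ρ) {α β : K}
    (hα : α + 1 ∈ S.maximalDominating ∨ α ∈ S \ S.maximalDominating)
    (hβ : β + 1 ∈ S.maximalDominating ∨ β ∈ S \ S.maximalDominating)
    {n : ℕ} (hn : 0 < n) (h : β - α = (n : K)) : (n : ℤ) ≤ ρ - 1 := by
  rcases hα with hα | ⟨hαS, -⟩ <;> rcases hβ with hβ | ⟨hβS, hβ₀⟩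
  · exact absurd (by rw [add_sub_add_right_eq_sub, h]) (hα.2.2 _ hβ.1 n hn)
  · obtain ⟨n, rfl⟩ := Nat.exists_eq_add_of_lt hn
    have hβα : β - (α + 1) = (n : K) := by push_cast at h; rw [← sub_sub, h]; abel
    rcases Nat.eq_zero_or_pos n with rfl | hn
    · rw [Nat.cast_zero, sub_eq_zero] at hβα
      exact absurd (hβα ▸ hα) hβ₀
    · exact absurd hβα (hα.2.2 β hβS n hn)
  · have := hρ α hαS (β + 1) hβ.1 (n + 1) (by push_cast; rw [← h]; abel)
    omega
  · have hnρ : n ≠ ρ := by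
      rintro rfl
      refine hβ₀ ⟨hβS, ⟨α, hαS, n, hn, h⟩, fun γ hγ q hq hγβ => ?_⟩
      have := hρ α hαS γ hγ (q + n) (by push_cast; rw [← hγβ, ← h]; abel)
      omega
    have := hρ α hαS β hβS n h
    omega

end Set

open PowerSeries Matrix Module.End

theorem hecke_modification_decreases_rho_general
    (k : Type) [Field k] (r m : ℕ)
    (A : Matrix (Fin r) (Fin r) (PowerSeries k)) :
    let kb := AlgebraicClosure k
    let A₀ : Matrix (Fin r) (Fin r) kb :=
      (A.map (constantCoeff (R := k))).map (algebraMap k kb)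
    let S : Set kb := {μ | A₀.charpoly.IsRoot μ}
    let S₀ : Set kb := {β ∈ S |
      (∃ α ∈ S, ∃ n : ℕ, 0 < n ∧ β - α = (n : kb)) ∧
      (∀ γ ∈ S, ∀ n : ℕ, 0 < n → γ - β ≠ (n : kb))}
    ∀ (hV : ∀ x : Fin r → kb,
        (x ∈ ⨆ β ∈ S₀, Module.End.maxGenEigenspace (Matrix.toLin' A₀) β) ↔
        (∀ i : Fin r, m ≤ (i : ℕ) → x i = 0))
      (ρ : ℕ) (hρpos : 0 < ρ)
      (hρbound : ∀ α ∈ S, ∀ β ∈ S, ∀ n : ℕ, β - α = (n : kb) → n ≤ ρ)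
      (hρmax : ∃ α ∈ S, ∃ β ∈ S, β - α = (ρ : kb)),
    -- the connection matrix of the modified lattice `E⁽²⁾`, computed over `k((t))`
    let tpow : Fin r → LaurentSeries k :=
      fun i => if (i : ℕ) < m then HahnSeries.single (1 : ℤ) 1 else 1
    let tpowinv : Fin r → LaurentSeries k :=
      fun i => if (i : ℕ) < m then HahnSeries.single (-1 : ℤ) 1 else 1
    let A'L : Matrix (Fin r) (Fin r) (LaurentSeries k) :=
      fun i j => tpow i * (HahnSeries.ofPowerSeries ℤ k (A i j)) * tpowinv j
        + (if i = j ∧ (i : ℕ) < m then -1 else 0)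
    ∃ A' : Matrix (Fin r) (Fin r) (PowerSeries k),
      A'.map (HahnSeries.ofPowerSeries ℤ k) = A'L ∧
      (∀ α β : AlgebraicClosure k,
        (((A'.map (constantCoeff (R := k))).map (algebraMap k (AlgebraicClosure k))).charpoly.IsRoot α) →
        (((A'.map (constantCoeff (R := k))).map (algebraMap k (AlgebraicClosure k))).charpoly.IsRoot β) →
        ∀ n : ℕ, 0 < n → β - α = (n : AlgebraicClosure k) → (n : ℤ) ≤ (ρ : ℤ) - 1) := by
  intro kb A₀ S S₀ hV ρ _ hρbound _ tpow tpowinv A'L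
  let p : Fin r → Prop := fun i => (i : ℕ) < m
  have hV' (x : Fin r → kb) : x ∈ ⨆ β ∈ S₀, maxGenEigenspace (toLin' A₀) β ↔
      ∀ i, ¬p i → x i = 0 := by
    simp only [hV, p, not_lt]
  have hA₀ := apply_eq_zero_of_biSup_maxGenEigenspace hV'
  have hA (i : Fin r) (hi : ¬p i) (j : Fin r) (hj : p j) : constantCoeff (A i j) = 0 :=
    (algebraMap k kb).injective (by rw [map_zero]; exact hA₀ i hi j hj)
  refine ⟨heckeModification p A, map_ofPowerSeries_heckeModification hA, ?_⟩
  have hshift (μ : kb) (hμ : (residue kb (heckeModification p A)).charpoly.IsRoot μ) :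
      μ + 1 ∈ S.maximalDominating ∨ μ ∈ S \ S.maximalDominating :=
    (isRoot_charpoly_residue_heckeModification kb hμ).imp
      (mem_of_isRoot_charpoly_toSquareBlockProp hV') fun h =>
        ⟨show A₀.charpoly.IsRoot μ by
            rw [charpoly_eq_mul_of_twoBlockTriangular hA₀]
            exact Polynomial.root_mul_left_of_isRoot _ h,
          notMem_of_isRoot_charpoly_toSquareBlockProp_not hV' h⟩
  exact fun α β hα hβ n hn h =>
    Set.natCast_le_sub_one_of_shift_maximalDominating hρbound (hshift α hα) (hshift β hβ) hn h

theorem hecke_modification_decreases_rho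
    (k : Type) [Field k] [CharZero k] (r m : ℕ) (hm : m ≤ r) (hm0 : 0 < m)
    (A : Matrix (Fin r) (Fin r) (PowerSeries k)) :
    let kb := AlgebraicClosure k
    let A₀ : Matrix (Fin r) (Fin r) kb :=
      (A.map (constantCoeff (R := k))).map (algebraMap k kb)
    let S : Set kb := {μ | A₀.charpoly.IsRoot μ}
    let S₀ : Set kb := {β ∈ S |
      (∃ α ∈ S, ∃ n : ℕ, 0 < n ∧ β - α = (n : kb)) ∧
      (∀ γ ∈ S, ∀ n : ℕ, 0 < n → γ - β ≠ (n : kb))}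
    ∀ (hV : ∀ x : Fin r → kb,
        (x ∈ ⨆ β ∈ S₀, Module.End.maxGenEigenspace (Matrix.toLin' A₀) β) ↔
        (∀ i : Fin r, m ≤ (i : ℕ) → x i = 0))
      (ρ : ℕ) (hρpos : 0 < ρ)
      (hρbound : ∀ α ∈ S, ∀ β ∈ S, ∀ n : ℕ, β - α = (n : kb) → n ≤ ρ)
      (hρmax : ∃ α ∈ S, ∃ β ∈ S, β - α = (ρ : kb)),
    -- the connection matrix of the modified lattice `E⁽²⁾`, computed over `k((t))`
    let tpow : Fin r → LaurentSeries k :=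
      fun i => if (i : ℕ) < m then HahnSeries.single (1 : ℤ) 1 else 1
    let tpowinv : Fin r → LaurentSeries k :=
      fun i => if (i : ℕ) < m then HahnSeries.single (-1 : ℤ) 1 else 1
    let A'L : Matrix (Fin r) (Fin r) (LaurentSeries k) :=
      fun i j => tpow i * (HahnSeries.ofPowerSeries ℤ k (A i j)) * tpowinv j
        + (if i = j ∧ (i : ℕ) < m then -1 else 0)
    ∃ A' : Matrix (Fin r) (Fin r) (PowerSeries k),
      A'.map (HahnSeries.ofPowerSeries ℤ k) = A'L ∧
      (∀ α β : AlgebraicClosure k,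
        (((A'.map (constantCoeff (R := k))).map (algebraMap k (AlgebraicClosure k))).charpoly.IsRoot α) →
        (((A'.map (constantCoeff (R := k))).map (algebraMap k (AlgebraicClosure k))).charpoly.IsRoot β) →
        ∀ n : ℕ, 0 < n → β - α = (n : AlgebraicClosure k) → (n : ℤ) ≤ (ρ : ℤ) - 1) :=
  hecke_modification_decreases_rho_general k r m A
end

section
/- Let k be an algebraically closed field of characteristic p > 0 and (E, ∇) a free k[[t]]-module of rank r with connection satisfying ∇(∂_t)(E) ⊂ E·t^{−μ}, where 10·r!·μ < p. Suppose ∇ = d𝔞·id_E + ∇^{reg}, where 𝔞 ∈ k((t))_{<0} with ord_t(𝔞) > −p, and ∇^{reg} is logarithmic. Let ψ and ψ_{reg} denote the p-curvatures of ∇ and ∇^{reg}. Then ψ(t∂_t) = ψ_{reg}(t∂_t) + (t∂_t 𝔞)^p · id_E, and ψ_{reg}(t∂_t) preserves E (i.e. has matrix in M_r(k[[t]])). -/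
noncomputable section

/-- The derivation `t ∂_t` on formal Laurent series. -/
def tdt {R : Type} [CommRing R] (f : LaurentSeries R) : LaurentSeries R :=
  { coeff := fun n => (n : ℤ) • f.coeff n
    isPWO_support' := f.isPWO_support'.mono (fun n hn => by
      simp only [Function.mem_support] at hn ⊢
      intro h; apply hn; rw [h, smul_zero]) }

/-- the standard lattice `E = (k[[t]])^r ⊆ (k((t)))^r` -/
def lattice (k : Type) [Field k] (r : ℕ) : Set (Fin r → LaurentSeries k) :=
  {w | ∀ i (n : ℤ), n < 0 → (w i).coeff n = 0}

/-!
Write `b = t∂_t 𝔞`, so that `D = b + D_reg` with `[D_reg, b] = t∂_t b`. Moving every `D_reg` to the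
right gives `(b + D_reg)^n = ∑ C(n, j) G_{n-j} D_reg^j`, where `G_m = (t∂_t + b)^m (1)` is the
complete Bell polynomial in `b, t∂_t b, (t∂_t)^2 b, …`. For `n = p` only `j = 0, p` survive, and
`G_p = b^p + (t∂_t)^{p-1} b`: the partial Bell polynomials satisfy
`i B_{p,i} = ∑_j C(p, j) (t∂_t)^{j-1} b · B_{p-j,i-1}`, whose right side vanishes mod `p` when
`1 < i < p`. Finally `(t∂_t)^{p-1} b = (t∂_t)^p 𝔞 = t∂_t 𝔞` because `n^p ≡ n mod p`.
-/

section tdt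

variable {R : Type} [CommRing R]

@[simp] lemma coeff_tdt (f : LaurentSeries R) (n : ℤ) : (tdt f).coeff n = n • f.coeff n := rfl

lemma support_tdt_subset (f : LaurentSeries R) : (tdt f).support ⊆ f.support :=
  fun n hn h ↦ hn (by rw [coeff_tdt, h, smul_zero])

lemma tdt_mul (f g : LaurentSeries R) : tdt (f * g) = tdt f * g + f * tdt g := by
  ext n
  rw [HahnSeries.coeff_add, HahnSeries.coeff_mul_left' f.isPWO_support (support_tdt_subset f),
    HahnSeries.coeff_mul_right' g.isPWO_support (support_tdt_subset g), coeff_tdt,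
    HahnSeries.coeff_mul, Finset.smul_sum, ← Finset.sum_add_distrib]
  refine Finset.sum_congr rfl fun ij hij ↦ ?_
  rw [← (Finset.mem_antidiagonal.mp hij).2.2, coeff_tdt, coeff_tdt, add_smul,
    smul_mul_assoc, mul_smul_comm]

lemma tdt_algebraMap (c : R) : tdt (algebraMap R (LaurentSeries R) c) = 0 := by
  ext n
  by_cases hn : n = 0 <;> simp [HahnSeries.algebraMap_apply', HahnSeries.C_apply, hn]

instance : SMulCommClass (LaurentSeries R) R (LaurentSeries R) where
  smul_comm s c f := by simp only [smul_eq_mul, ← HahnSeries.C_mul_eq_smul, mul_left_comm]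

section

/- `Module R (LaurentSeries R)` is found as the coefficientwise action, which is not
definitionally the one induced by `Algebra R (LaurentSeries R)`; a `Derivation` over that algebra
must use the latter. -/
attribute [local instance 2000] Algebra.toModule

variable (R) in
def tdtDerivation : Derivation R (LaurentSeries R) (LaurentSeries R) where
  toFun := tdt
  map_add' f g := by ext n; simp [smul_add]
  map_smul' c f := by
    rw [RingHom.id_apply, Algebra.smul_def, Algebra.smul_def, tdt_mul, tdt_algebraMap, zero_mul,
      zero_add]
  map_one_eq_zero' := by simpa using tdt_algebraMap (R := R) 1
  leibniz' f g := by simp [tdt_mul, smul_eq_mul, mul_comm, add_comm]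

end

@[simp] lemma coe_tdtDerivation : ⇑(tdtDerivation R) = tdt := rfl

lemma coeff_iterate_tdt (m : ℕ) (f : LaurentSeries R) (n : ℤ) :
    (tdt^[m] f).coeff n = n ^ m • f.coeff n := by
  induction m generalizing f with
  | zero => simp
  | succ m ih => rw [Function.iterate_succ_apply, ih, coeff_tdt, smul_smul, pow_succ]

lemma iterate_tdt_char (p : ℕ) [Fact p.Prime] [CharP R p] :
    tdt^[p] = (tdt : LaurentSeries R → LaurentSeries R) := by
  funext f
  ext n
  rw [coeff_iterate_tdt, coeff_tdt, zsmul_eq_mul, zsmul_eq_mul, Int.cast_pow, ← frobenius_def,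
    map_intCast]

end tdt

open Finset

lemma sum_antidiagonal_choose_succ_succ_nsmul {M : Type*} [AddCommMonoid M] (f : ℕ → ℕ → M)
    (n : ℕ) :
    ∑ ij ∈ antidiagonal (n + 1), (n + 2).choose (ij.1 + 1) • f ij.1 ij.2 =
      f 0 (n + 1) + ∑ ij ∈ antidiagonal n, (n + 1).choose (ij.1 + 1) • f (ij.1 + 1) ij.2 +
        ∑ ij ∈ antidiagonal n, (n + 1).choose (ij.1 + 1) • f ij.1 (ij.2 + 1) := by
  simp_rw [Nat.choose_succ_succ' (n + 1), add_smul, sum_add_distrib]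
  rw [Nat.sum_antidiagonal_succ, Nat.sum_antidiagonal_succ']
  simp only [Nat.choose_zero_right, one_smul, Nat.choose_succ_self, zero_smul, zero_add]

namespace Derivation

variable {A R : Type*} [CommSemiring A] [CommRing R] [Algebra A R] (δ : Derivation A R R) (a : R)

/-- `partialBell n i` is the partial Bell polynomial `B_{n,i}(a, δ a, δ² a, …)`, i.e. the
coefficient of `s^i` in `(δ + s a)^n (1)`. -/
def partialBell : ℕ → ℕ → R
  | 0, i => if i = 0 then 1 else 0
  | _ + 1, 0 => 0
  | n + 1, i + 1 => a * partialBell n i + δ (partialBell n (i + 1))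

/-- `completeBell n = (δ + a)^n (1)`. -/
def completeBell : ℕ → R
  | 0 => 1
  | n + 1 => a * completeBell n + δ (completeBell n)

variable {δ a}

lemma partialBell_eq_zero_of_lt {n i : ℕ} (h : n < i) : δ.partialBell a n i = 0 := by
  induction n generalizing i with
  | zero => simp [partialBell, h.ne']
  | succ n ih =>
    obtain ⟨i, rfl⟩ := Nat.exists_eq_add_of_lt (Nat.zero_lt_of_lt h)
    simp only [zero_add] at h ⊢
    rw [partialBell, ih (by omega), ih (by omega), mul_zero, map_zero, add_zero]

lemma partialBell_self (n : ℕ) : δ.partialBell a n n = a ^ n := by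
  induction n with
  | zero => simp [partialBell]
  | succ n ih =>
    rw [partialBell, ih, partialBell_eq_zero_of_lt n.lt_succ_self, map_zero, add_zero, pow_succ']

lemma partialBell_succ_one (n : ℕ) : δ.partialBell a (n + 1) 1 = δ^[n] a := by
  induction n with
  | zero => simp [partialBell]
  | succ n ih => rw [partialBell, ih, partialBell, mul_zero, zero_add, Function.iterate_succ_apply']

lemma map_partialBell_zero (n : ℕ) : δ (δ.partialBell a n 0) = 0 := by
  cases n <;> simp [partialBell]

lemma completeBell_eq_sum_partialBell (n : ℕ) :
    δ.completeBell a n = ∑ i ∈ range (n + 1), δ.partialBell a n i := by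
  induction n with
  | zero => simp [completeBell, partialBell]
  | succ n ih =>
    have hδ : δ (∑ i ∈ range (n + 1), δ.partialBell a n i) =
        ∑ i ∈ range (n + 1), δ (δ.partialBell a n (i + 1)) := by
      rw [map_sum, sum_range_succ', sum_range_succ, map_partialBell_zero,
        partialBell_eq_zero_of_lt n.lt_succ_self, map_zero]
    rw [completeBell, ih, hδ, mul_sum, ← sum_add_distrib, sum_range_succ' _ (n + 1)]
    simp [partialBell]

lemma succ_nsmul_partialBell_succ (n i : ℕ) :
    (i + 1) • δ.partialBell a (n + 1) (i + 1) =
      ∑ jm ∈ antidiagonal n, (n + 1).choose (jm.1 + 1) • (δ^[jm.1] a * δ.partialBell a jm.2 i) := by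
  induction n generalizing i with
  | zero => cases i <;> simp [partialBell]
  | succ n ih =>
    have hδ : δ ((i + 1) • δ.partialBell a (n + 1) (i + 1)) =
        ∑ jm ∈ antidiagonal n,
          (n + 1).choose (jm.1 + 1) • (δ^[jm.1 + 1] a * δ.partialBell a jm.2 i) +
        ∑ jm ∈ antidiagonal n,
          (n + 1).choose (jm.1 + 1) • (δ^[jm.1] a * δ (δ.partialBell a jm.2 i)) := by
      rw [ih, map_sum, ← sum_add_distrib]
      refine sum_congr rfl fun jm _ ↦ ?_
      rw [map_nsmul, leibniz, Function.iterate_succ_apply', ← smul_add, smul_eq_mul, smul_eq_mul]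
      congr 1
      ring
    have hc : a * (i • δ.partialBell a (n + 1) i) +
        ∑ jm ∈ antidiagonal n,
          (n + 1).choose (jm.1 + 1) • (δ^[jm.1] a * δ (δ.partialBell a jm.2 i)) =
        ∑ jm ∈ antidiagonal n,
          (n + 1).choose (jm.1 + 1) • (δ^[jm.1] a * δ.partialBell a (jm.2 + 1) i) := by
      cases i with
      | zero => simp [partialBell, map_partialBell_zero]
      | succ i =>
        rw [ih, mul_sum, ← sum_add_distrib]
        refine sum_congr rfl fun jm _ ↦ ?_
        rw [partialBell, mul_smul_comm, ← smul_add]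
        ring
    calc (i + 1) • δ.partialBell a (n + 1 + 1) (i + 1)
        = a * (i • δ.partialBell a (n + 1) i) + a * δ.partialBell a (n + 1) i +
            δ ((i + 1) • δ.partialBell a (n + 1) (i + 1)) := by
          rw [partialBell, map_nsmul, smul_add, succ_nsmul (a * δ.partialBell a (n + 1) i),
            mul_smul_comm]
      _ = a * δ.partialBell a (n + 1) i +
          ∑ jm ∈ antidiagonal n,
            (n + 1).choose (jm.1 + 1) • (δ^[jm.1 + 1] a * δ.partialBell a jm.2 i) +
          ∑ jm ∈ antidiagonal n,
            (n + 1).choose (jm.1 + 1) • (δ^[jm.1] a * δ.partialBell a (jm.2 + 1) i) := by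
          rw [hδ, ← hc]
          abel
      _ = _ := by
        rw [sum_antidiagonal_choose_succ_succ_nsmul (fun j m ↦ δ^[j] a * δ.partialBell a m i)]
        rw [Function.iterate_zero_apply]

variable {E : Type*} [Ring E] (ι : R →+* E) {D : E}

lemma add_pow_eq_sum_completeBell (hD : ∀ r, D * ι r = ι (δ r) + ι r * D) (n : ℕ) :
    (ι a + D) ^ n =
      ∑ ij ∈ antidiagonal n, n.choose ij.1 • (ι (δ.completeBell a ij.1) * D ^ ij.2) := by
  induction n with
  | zero => simp [completeBell]
  | succ n ih =>
    rw [pow_succ', ih, mul_sum, sum_antidiagonal_choose_succ_nsmul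
      (fun i j ↦ ι (δ.completeBell a i) * D ^ j)]
    have hsymm : ∑ ij ∈ antidiagonal n,
        n.choose ij.2 • (ι (δ.completeBell a (ij.1 + 1)) * D ^ ij.2) =
        ∑ ij ∈ antidiagonal n, n.choose ij.1 • (ι (δ.completeBell a (ij.1 + 1)) * D ^ ij.2) := by
      refine sum_congr rfl fun ij hij ↦ ?_
      rw [Nat.choose_symm_of_eq_add (Finset.HasAntidiagonal.mem_antidiagonal.mp hij).symm]
    rw [hsymm, ← sum_add_distrib]
    refine sum_congr rfl fun ij _ ↦ ?_
    rw [mul_smul_comm, ← smul_add]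
    congr 1
    rw [completeBell, map_add, map_mul, pow_succ', add_mul, ← mul_assoc D, hD]
    noncomm_ring

variable (p : ℕ) [hp : Fact p.Prime] [CharP R p]

lemma partialBell_char_eq_zero {i : ℕ} (hi : 1 < i) (hip : i < p) : δ.partialBell a p i = 0 := by
  obtain ⟨q, rfl⟩ : ∃ q, p = q + 1 := ⟨p - 1, by have := hp.out.pos; omega⟩
  obtain ⟨i, rfl⟩ : ∃ i', i = i' + 1 := ⟨i - 1, by omega⟩
  have hsum : ∑ jm ∈ antidiagonal q,
      (q + 1).choose (jm.1 + 1) • (δ^[jm.1] a * δ.partialBell a jm.2 i) = 0 := by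
    refine sum_eq_zero fun jm hjm ↦ ?_
    rw [Finset.HasAntidiagonal.mem_antidiagonal] at hjm
    rcases Nat.eq_zero_or_pos jm.2 with h2 | h2
    · rw [h2, partialBell, if_neg (by omega), mul_zero, smul_zero]
    · obtain ⟨m, hm⟩ := hp.out.dvd_choose_self (Nat.succ_ne_zero jm.1) (by omega)
      rw [hm, mul_nsmul', nsmul_eq_mul, CharP.cast_eq_zero, zero_mul]
  have hunit : IsUnit ((i + 1 : ℕ) : R) :=
    (CharP.isUnit_natCast_iff hp.out).mpr (Nat.not_dvd_of_pos_of_lt (by omega) hip)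
  rw [← hunit.mul_right_eq_zero, ← nsmul_eq_mul]
  simpa using (succ_nsmul_partialBell_succ q i).trans hsum

lemma completeBell_char : δ.completeBell a p = a ^ p + δ^[p - 1] a := by
  obtain ⟨q, rfl⟩ : ∃ q, p = q + 1 := ⟨p - 1, by have := hp.out.pos; omega⟩
  have hq := hp.out.two_le
  rw [completeBell_eq_sum_partialBell, sum_eq_add_of_mem (q + 1) 1 (by simp) (by simp) (by omega),
    partialBell_self, partialBell_succ_one, Nat.add_sub_cancel]
  intro i hi hne
  rw [mem_range] at hi
  rcases Nat.lt_or_ge i 2 with h | h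
  · obtain rfl : i = 0 := by omega
    rfl
  · exact partialBell_char_eq_zero (q + 1) (by omega) (by omega)

lemma add_pow_char_of_commutator (hD : ∀ r, D * ι r = ι (δ r) + ι r * D) :
    (ι a + D) ^ p = ι (a ^ p + δ^[p - 1] a) + D ^ p := by
  have hp0 := hp.out.ne_zero
  rw [add_pow_eq_sum_completeBell ι hD, sum_eq_add_of_mem (p, 0) (0, p) (by simp) (by simp)
    (by simp [hp0]), completeBell_char p]
  · simp [completeBell]
  · rintro ⟨i, j⟩ hij hne
    rw [Finset.HasAntidiagonal.mem_antidiagonal] at hij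
    obtain ⟨m, hm⟩ := hp.out.dvd_choose_self (k := i) (by grind) (by grind)
    rw [hm, mul_nsmul', nsmul_eq_mul, ← _root_.map_natCast ι, CharP.cast_eq_zero, map_zero,
      zero_mul]

end Derivation

theorem p_curvature_of_twist_general
    (k : Type) [Field k] (p : ℕ) [Fact p.Prime] [CharP k p]
    (r : ℕ)
    (𝔞 : LaurentSeries k)
    (D Dreg : Module.End k (Fin r → LaurentSeries k))
    (hDreg : ∀ (a : LaurentSeries k) (w : Fin r → LaurentSeries k),
      Dreg (a • w) = tdt a • w + a • Dreg w)
    (hsplit : ∀ w, D w = tdt 𝔞 • w + Dreg w)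
    (hlog : ∀ w ∈ lattice k r, Dreg w ∈ lattice k r) :
    (∀ w, (D ^ p) w - D w = (Dreg ^ p) w - Dreg w + (tdt 𝔞) ^ p • w) ∧
    (∀ w ∈ lattice k r, (Dreg ^ p) w - Dreg w ∈ lattice k r) := by
  have := charP_of_injective_algebraMap (algebraMap k (LaurentSeries k)).injective p
  let ι := Module.toModuleEnd k (S := LaurentSeries k) (Fin r → LaurentSeries k)
  have hD : D = ι (tdt 𝔞) + Dreg := LinearMap.ext hsplit
  have hcomm (s : LaurentSeries k) : Dreg * ι s = ι (tdtDerivation k s) + ι s * Dreg :=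
    LinearMap.ext (hDreg s)
  have hψ : D ^ p = ι (tdt 𝔞 ^ p + tdt 𝔞) + Dreg ^ p := by
    rw [hD, (tdtDerivation k).add_pow_char_of_commutator ι p hcomm, coe_tdtDerivation,
      ← Function.iterate_succ_apply, Nat.succ_eq_add_one,
      Nat.sub_add_cancel (Fact.out : p.Prime).one_le, iterate_tdt_char]
  refine ⟨fun w ↦ ?_, fun w hw i n hn ↦ ?_⟩
  · rw [hψ, hD]
    simp only [ι, Module.toModuleEnd_apply, LinearMap.add_apply, DistribSMul.toLinearMap_apply,
      add_smul]
    abel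
  · have hpow : (Dreg ^ p) w ∈ lattice k r := by
      rw [Module.End.coe_pow]
      exact Set.MapsTo.iterate hlog p hw
    simp only [Pi.sub_apply, HahnSeries.coeff_sub', hpow i n hn, hlog w hw i n hn, sub_self]

theorem p_curvature_of_twist
    (k : Type) [Field k] [IsAlgClosed k] (p : ℕ) [Fact p.Prime] [CharP k p]
    (r μ : ℕ) (hμ : 10 * r.factorial * μ < p)
    (𝔞 : LaurentSeries k)
    (h𝔞neg : ∀ n : ℤ, 0 ≤ n → 𝔞.coeff n = 0)
    (h𝔞ord : ∀ n : ℤ, n ≤ -(p : ℤ) → 𝔞.coeff n = 0)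
    (D Dreg : Module.End k (Fin r → LaurentSeries k))
    (hD : ∀ (a : LaurentSeries k) (w : Fin r → LaurentSeries k),
      D (a • w) = tdt a • w + a • D w)
    (hDreg : ∀ (a : LaurentSeries k) (w : Fin r → LaurentSeries k),
      Dreg (a • w) = tdt a • w + a • Dreg w)
    (hsplit : ∀ w, D w = tdt 𝔞 • w + Dreg w)
    (hpole : ∀ w ∈ lattice k r, ∀ i (n : ℤ), n < 1 - (μ : ℤ) → (D w i).coeff n = 0)
    (hlog : ∀ w ∈ lattice k r, Dreg w ∈ lattice k r) :
    (∀ w, (D ^ p) w - D w = (Dreg ^ p) w - Dreg w + (tdt 𝔞) ^ p • w) ∧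
    (∀ w ∈ lattice k r, (Dreg ^ p) w - Dreg w ∈ lattice k r) :=
  p_curvature_of_twist_general k p r 𝔞 D Dreg hDreg hsplit hlog
end
end

section
/- Let k be algebraically closed of characteristic 0 (or with the ramification assumptions of the paper) and let E be a Deligne–Malgrange lattice of an unramified meromorphic connection (E((t)), ∇), i.e. the irregular decomposition E((t)) = ⊕_𝔞 E_𝔞((t)) restricts to E = ⊕_𝔞 E_𝔞 over k[[t]]. Let 𝐯 be any k[[t]]-frame of E and A ∈ M_r(k((t))) the matrix of ∇(t∂_t) in this frame. Then Irr(E((t)), ∇) = { I_t(α_−) : α an eigenvalue of A in k((t_d)) }. -/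
/-!
Write `𝒪 k = k[[t_d]]` inside `k((t_d))`. As `G G⁻¹ = 1`, the matrix `A` has the characteristic
polynomial of `diag(δ) + N` with `δᵢ = τ 𝔞ᵢ` polar and `N = Rm + τ(G) G⁻¹` integral, and `I_t`
inverts `τ` on polar series. So it suffices that every eigenvalue is congruent modulo `𝒪 k` to
some `δᵢ`, and every `δᵢ` to some eigenvalue.

Both come from one scaling: dividing the rows `i` with `Dᵢ ∉ 𝒪 k` by `Dᵢ` gives
`det(diag(D) - N) = (∏ Dᵢ) · g` with `g ∈ 𝒪 k`, and modulo `t_d` the scaled matrix is block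
triangular, so `g(0)` is the determinant of the reduced block on `{i | Dᵢ ∈ 𝒪 k}`.
If `α - δᵢ ∉ 𝒪 k` for all `i`, that block is empty, so `g(0) = 1` and `α` is not an eigenvalue.
For `b = δᵢ₀` and `x ∈ k`, the choice `D = x + b - δ` gives `g_x(0) = χ(x)`, where `χ` is the
characteristic polynomial of the reduction of `N` on `{i | δᵢ = b}`. If no eigenvalue were
congruent to `b`, the order of `det(x + b - diag(δ) - N) = ∏(x + b - α)` would not depend on `x`,
hence neither would that of `g_x`, and `χ` would vanish on all of `k` or nowhere: impossible for
a polynomial of positive degree over an algebraically closed field.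
-/

noncomputable section

/-- the negative (polar) part of a Laurent series -/
def negPart {R : Type} [CommRing R] (f : LaurentSeries R) : LaurentSeries R :=
  { coeff := fun n => if n < 0 then f.coeff n else 0
    isPWO_support' := f.isPWO_support'.mono (fun n hn => by
      simp only [Function.mem_support] at hn ⊢
      intro h; apply hn; split <;> simp [h]) }

/-- the formal antiderivative `I_t` with respect to `t∂_t`, where `t = t_d ^ d`. -/
def It {k : Type} [Field k] (d : ℕ) (f : LaurentSeries k) : LaurentSeries k :=
  { coeff := fun n => if n < 0 then ((d : k) * (n : k)⁻¹) • f.coeff n else 0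
    isPWO_support' := f.isPWO_support'.mono (fun n hn => by
      simp only [Function.mem_support] at hn ⊢
      intro h; apply hn; split <;> simp [h]) }

open HahnSeries

local notation "𝒪" K:max => RingHom.range (HahnSeries.ofPowerSeries ℤ K)

theorem Matrix.det_eq_det_toSquareBlockProp {n R : Type*} [Fintype n] [DecidableEq n] [CommRing R]
    (M : Matrix n n R) (p : n → Prop) [DecidablePred p]
    (h : ∀ i, ¬p i → ∀ j, M i j = (1 : Matrix n n R) i j) :
    M.det = (M.toSquareBlockProp p).det := by
  have hblock : M.toSquareBlockProp (¬p ·) = 1 := by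
    ext i j
    simp [toSquareBlockProp_def, h i i.2, one_apply, Subtype.ext_iff]
  rw [M.twoBlockTriangular_det p fun i hi j hj => (h i hi j).trans (one_apply_ne (by grind)),
    hblock, det_one, mul_one]

namespace LaurentSeries

variable {K : Type*} [Field K]

theorem mem_range_ofPowerSeries_iff {f : K⸨X⸩} : f ∈ 𝒪 K ↔ ∀ n < 0, f.coeff n = 0 := by
  rw [RingHom.mem_range, ← val_le_one_iff_eq_coe, ← valuation_le_iff_coeff_lt_eq_zero, neg_zero,
    WithZero.exp_zero]

theorem mem_range_ofPowerSeries_iff_zero_le_orderTop {f : K⸨X⸩} : f ∈ 𝒪 K ↔ 0 ≤ f.orderTop := by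
  rw [mem_range_ofPowerSeries_iff, le_orderTop_iff_forall]
  simp

theorem coeff_zero_ofPowerSeries (q : PowerSeries K) :
    (ofPowerSeries ℤ K q).coeff 0 = PowerSeries.constantCoeff q := by
  simpa using coeff_coe_powerSeries q 0

theorem C_mem_range_ofPowerSeries (x : K) : C x ∈ 𝒪 K := ⟨PowerSeries.C x, ofPowerSeries_C x⟩

theorem orderTop_inv_pos_of_notMem {f : K⸨X⸩} (hf : f ∉ 𝒪 K) : 0 < f⁻¹.orderTop := by
  have hf0 : f ≠ 0 := fun h => hf (h ▸ zero_mem _)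
  rw [mem_range_ofPowerSeries_iff_zero_le_orderTop, zero_le_orderTop_iff, not_le] at hf
  have hsum := order_mul hf0 (inv_ne_zero hf0)
  rw [mul_inv_cancel₀ hf0, order_one] at hsum
  exact zero_lt_orderTop_of_order (by omega)

theorem one_le_orderTop_of_coeff_zero_eq_zero {g : K⸨X⸩} (hg : g ∈ 𝒪 K) (h0 : g.coeff 0 = 0) :
    1 ≤ g.orderTop := by
  rw [mem_range_ofPowerSeries_iff] at hg
  refine le_orderTop_iff_forall.2 fun j hj => ?_
  have hj : j < 1 := by exact_mod_cast hj
  rcases (show j < 0 ∨ j = 0 by omega) with hj | rfl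
  exacts [hg j hj, h0]

theorem orderTop_prod_C_sub_of_notMem {ι : Type*} (s : Multiset ι) (γ : ι → K⸨X⸩)
    (hs : ∀ i ∈ s, γ i ∉ 𝒪 K) (x : K) :
    (s.map fun i => C x - γ i).prod.orderTop = (s.map fun i => (γ i).orderTop).sum := by
  induction s using Multiset.induction_on with
  | empty => simp
  | cons i s ih =>
    have hi : (γ i).orderTop < (C x).orderTop :=
      (lt_of_not_ge (mem_range_ofPowerSeries_iff_zero_le_orderTop.not.1
        (hs i (Multiset.mem_cons_self i s)))).trans_le
        (mem_range_ofPowerSeries_iff_zero_le_orderTop.1 (C_mem_range_ofPowerSeries x))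
    rw [Multiset.map_cons, Multiset.prod_cons, orderTop_mul, ← orderTop_neg, neg_sub,
      orderTop_sub hi, ih fun j hj => hs j (Multiset.mem_cons_of_mem hj), Multiset.map_cons,
      Multiset.sum_cons]

variable {n : Type*} [Fintype n] [DecidableEq n]

theorem det_mem_and_coeff_zero_det {Q : Matrix n n K⸨X⸩} (hQ : ∀ i j, Q i j ∈ 𝒪 K) :
    Q.det ∈ 𝒪 K ∧ Q.det.coeff 0 = (Q.map (·.coeff 0)).det := by
  choose Q₀ hQ₀ using hQ
  obtain rfl : Q = (ofPowerSeries ℤ K).mapMatrix (Matrix.of Q₀) := by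
    ext1 i j; exact (hQ₀ i j).symm
  rw [← RingHom.map_det]
  refine ⟨⟨_, rfl⟩, ?_⟩
  rw [coeff_zero_ofPowerSeries, RingHom.map_det]
  congr 1
  ext i j
  simp [coeff_zero_ofPowerSeries]

theorem exists_det_diagonal_sub_eq_prod_mul (D : n → K⸨X⸩) {N : Matrix n n K⸨X⸩}
    (hN : ∀ i j, N i j ∈ 𝒪 K) (p : n → Prop) [DecidablePred p] (hp : ∀ i, p i ↔ D i ∈ 𝒪 K) :
    ∃ g ∈ 𝒪 K, (Matrix.diagonal D - N).det = (∏ i with ¬p i, D i) * g ∧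
      g.coeff 0 = (((Matrix.diagonal D - N).map (·.coeff 0)).toSquareBlockProp p).det := by
  have hD : ∀ i, ¬p i → D i ≠ 0 := fun i h h0 => (hp i).not.1 h (h0 ▸ zero_mem _)
  have hsmall : ∀ i j, ¬p i → 0 < ((D i)⁻¹ * N i j).orderTop := fun i j h =>
    (add_pos_of_pos_of_nonneg (orderTop_inv_pos_of_notMem ((hp i).not.1 h))
      (mem_range_ofPowerSeries_iff_zero_le_orderTop.1 (hN i j))).trans_le orderTop_add_le_mul
  let Q : Matrix n n K⸨X⸩ := .of fun i j =>
    if p i then (Matrix.diagonal D - N) i j else (1 : Matrix n n K⸨X⸩) i j - (D i)⁻¹ * N i j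
  have hfactor : Matrix.diagonal D - N = Matrix.diagonal (fun i => if p i then 1 else D i) * Q := by
    ext i j
    by_cases h : p i
    · simp [Q, h]
    · rcases eq_or_ne i j with rfl | hij
      · simp [Q, h, mul_sub, mul_inv_cancel_left₀ (hD i h)]
      · simp [Q, h, hij, mul_inv_cancel_left₀ (hD i h)]
  have hQ : ∀ i j, Q i j ∈ 𝒪 K := by
    intro i j
    by_cases h : p i
    · simp only [Q, Matrix.of_apply, if_pos h, Matrix.sub_apply, Matrix.diagonal_apply]
      split_ifs
      exacts [sub_mem ((hp i).1 h) (hN i j), sub_mem (zero_mem _) (hN i j)]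
    · simp only [Q, Matrix.of_apply, if_neg h, Matrix.one_apply]
      refine sub_mem (by split_ifs <;> simp [one_mem, zero_mem])
        (mem_range_ofPowerSeries_iff_zero_le_orderTop.2 (hsmall i j h).le)
  obtain ⟨hmem, hcoeff⟩ := det_mem_and_coeff_zero_det hQ
  refine ⟨Q.det, hmem, ?_, ?_⟩
  · rw [hfactor, Matrix.det_mul, Matrix.det_diagonal, Finset.prod_ite, Finset.prod_const_one,
      one_mul]
  · rw [hcoeff, Matrix.det_eq_det_toSquareBlockProp _ p]
    · congr 1
      ext i j
      simp [Q, Matrix.toSquareBlockProp_def, i.2]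
    · intro i hi j
      simp only [Q, Matrix.map_apply, Matrix.of_apply, if_neg hi, coeff_sub,
        coeff_eq_zero_of_lt_orderTop (hsmall i j hi), sub_zero, Matrix.one_apply]
      split_ifs <;> simp

theorem eval_charpoly_diagonal_add (δ : n → K⸨X⸩) (N : Matrix n n K⸨X⸩) (a : K⸨X⸩) :
    (Matrix.diagonal δ + N).charpoly.eval a = (Matrix.diagonal (fun i => a - δ i) - N).det := by
  rw [Matrix.eval_charpoly, ← Matrix.diagonal_sub, sub_add_eq_sub_sub]
  rfl

theorem exists_sub_mem_of_isRoot_charpoly_diagonal_add (δ : n → K⸨X⸩) {N : Matrix n n K⸨X⸩}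
    (hN : ∀ i j, N i j ∈ 𝒪 K) {α : K⸨X⸩} (hα : (Matrix.diagonal δ + N).charpoly.IsRoot α) :
    ∃ i, α - δ i ∈ 𝒪 K := by
  by_contra! h
  obtain ⟨g, -, hdet, hg⟩ := exists_det_diagonal_sub_eq_prod_mul (fun i => α - δ i) hN
    (fun _ => False) (fun i => iff_of_false id (h i))
  rw [Matrix.det_isEmpty] at hg
  have hg0 : g ≠ 0 := fun h0 => by simp [h0] at hg
  have hprod : ∏ i with ¬False, (α - δ i) ≠ 0 :=
    Finset.prod_ne_zero_iff.2 fun i _ h0 => h i (h0 ▸ zero_mem _)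
  exact mul_ne_zero hprod hg0 (hdet ▸ eval_charpoly_diagonal_add δ N α ▸ hα)

theorem orderTop_eval_C_add_eq_sum_roots {P : Polynomial K⸨X⸩} (hsplit : P.Splits)
    (hmonic : P.Monic) {b : K⸨X⸩} (h : ∀ α ∈ P.roots, α - b ∉ 𝒪 K) (x : K) :
    (P.eval (C x + b)).orderTop = (P.roots.map fun α => (α - b).orderTop).sum := by
  rw [hsplit.eval_eq_prod_roots_of_monic hmonic, ← orderTop_prod_C_sub_of_notMem _ _ h x]
  exact congrArg _ (congrArg _ (Multiset.map_congr rfl fun α _ => by ring))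

open Classical in
theorem exists_orderTop_eval_charpoly_diagonal_add_eq (δ : n → K⸨X⸩) {N : Matrix n n K⸨X⸩}
    (hN : ∀ i j, N i j ∈ 𝒪 K) (hδ : ∀ i j, δ i - δ j ∈ 𝒪 K → δ i = δ j) (i₀ : n) (x : K) :
    ∃ g ∈ 𝒪 K, g.coeff 0 = ((N.map (·.coeff 0)).toSquareBlockProp (δ · = δ i₀)).charpoly.eval x ∧
      ((Matrix.diagonal δ + N).charpoly.eval (C x + δ i₀)).orderTop =
        (∑ i with δ i ≠ δ i₀, (δ i - δ i₀).orderTop) + g.orderTop := by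
  have hp : ∀ i, δ i = δ i₀ ↔ C x + δ i₀ - δ i ∈ 𝒪 K := fun i => by
    refine ⟨fun hi => ?_, fun hi => hδ i i₀ ?_⟩
    · rw [hi, add_sub_cancel_right]
      exact C_mem_range_ofPowerSeries x
    · rw [show δ i - δ i₀ = C x - (C x + δ i₀ - δ i) by ring]
      exact sub_mem (C_mem_range_ofPowerSeries x) hi
  obtain ⟨g, hg, hdet, hgχ⟩ := exists_det_diagonal_sub_eq_prod_mul _ hN _ hp
  refine ⟨g, hg, ?_, ?_⟩
  · rw [hgχ, Matrix.eval_charpoly]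
    congr 1
    ext i j
    rcases eq_or_ne i j with rfl | hij
    · simp [Matrix.toSquareBlockProp_def, i.2]
    · simp [Matrix.toSquareBlockProp_def, hij, Subtype.val_injective.ne hij]
  · have hrest : ∀ i ∈ ({i | δ i ≠ δ i₀} : Finset n).val, δ i - δ i₀ ∉ 𝒪 K := fun i hi hmem =>
      (Finset.mem_filter.1 hi).2 (hδ i i₀ hmem)
    rw [eval_charpoly_diagonal_add, hdet, orderTop_mul, Finset.sum_eq_multiset_sum,
      ← orderTop_prod_C_sub_of_notMem _ _ hrest x, Finset.prod_eq_multiset_prod]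
    exact congrArg (· + _) (congrArg _ (congrArg _ (Multiset.map_congr rfl fun i _ => by ring)))

theorem exists_isRoot_charpoly_diagonal_add_sub_mem [IsAlgClosed K] (δ : n → K⸨X⸩)
    {N : Matrix n n K⸨X⸩} (hN : ∀ i j, N i j ∈ 𝒪 K) (hδ : ∀ i j, δ i - δ j ∈ 𝒪 K → δ i = δ j)
    (hsplit : (Matrix.diagonal δ + N).charpoly.Splits) (i₀ : n) :
    ∃ α, (Matrix.diagonal δ + N).charpoly.IsRoot α ∧ α - δ i₀ ∈ 𝒪 K := by
  classical
  by_contra! h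
  set P := (Matrix.diagonal δ + N).charpoly
  set χ := ((N.map (·.coeff 0)).toSquareBlockProp (δ · = δ i₀)).charpoly
  have hroots : ∀ α ∈ P.roots, α - δ i₀ ∉ 𝒪 K := fun α hα =>
    h α ((Polynomial.mem_roots (Matrix.charpoly_monic _).ne_zero).1 hα)
  have hP := orderTop_eval_C_add_eq_sum_roots hsplit (Matrix.charpoly_monic _) hroots
  have hV : (P.eval (C 0 + δ i₀)).orderTop ≠ ⊤ := by
    rw [Ne, orderTop_eq_top, map_zero, zero_add]
    exact fun hb => h _ hb (by simp)
  obtain ⟨x₀, hx₀⟩ := IsAlgClosed.exists_root χ (by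
    rw [Matrix.charpoly_degree_eq_dim]
    exact_mod_cast (Fintype.card_pos_iff.2 ⟨(⟨i₀, rfl⟩ : {i // δ i = δ i₀})⟩).ne')
  obtain ⟨x₁, hx₁⟩ : ∃ x, χ.eval x ≠ 0 := by
    by_contra! hχ
    exact (Matrix.charpoly_monic _).ne_zero (Polynomial.funext (by simpa using hχ))
  obtain ⟨g₀, hg₀, hg₀χ, hV₀⟩ := exists_orderTop_eval_charpoly_diagonal_add_eq δ hN hδ i₀ x₀
  obtain ⟨g₁, -, hg₁χ, hV₁⟩ := exists_orderTop_eval_charpoly_diagonal_add_eq δ hN hδ i₀ x₁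
  rw [hP] at hV hV₀ hV₁
  obtain ⟨w, hw⟩ := WithTop.ne_top_iff_exists.1 (WithTop.add_ne_top.1 (hV₀ ▸ hV)).1
  rw [← hw] at hV₀ hV₁
  have : (w : WithTop ℤ) + 1 ≤ w + 0 := calc
    (w : WithTop ℤ) + 1 ≤ w + g₀.orderTop := by
      gcongr; exact one_le_orderTop_of_coeff_zero_eq_zero hg₀ (hg₀χ.trans hx₀)
    _ = w + g₁.orderTop := hV₀.symm.trans hV₁
    _ ≤ w + 0 := by gcongr; exact orderTop_le_of_coeff_ne_zero (hg₁χ ▸ hx₁)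
  norm_cast at this
  omega

end LaurentSeries

theorem coeff_smul_tdt {R : Type} [CommRing R] (c : R) (f : LaurentSeries R) (n : ℤ) :
    (c • tdt f).coeff n = c * (n • f.coeff n) :=
  rfl

section

variable {k : Type} [Field k]

theorem smul_tdt_mem_range_ofPowerSeries (c : k) {f : LaurentSeries k} (hf : f ∈ 𝒪 k) :
    c • tdt f ∈ 𝒪 k :=
  LaurentSeries.mem_range_ofPowerSeries_iff.2 fun n hn => by
    rw [coeff_smul_tdt, LaurentSeries.mem_range_ofPowerSeries_iff.1 hf n hn, smul_zero, mul_zero]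

theorem negPart_eq_of_sub_mem {α β : LaurentSeries k} (h : α - β ∈ 𝒪 k)
    (hβ : ∀ n, 0 ≤ n → β.coeff n = 0) : negPart α = β := by
  ext n
  change (if n < 0 then α.coeff n else 0) = β.coeff n
  split_ifs with hn
  · exact sub_eq_zero.1 (by simpa using LaurentSeries.mem_range_ofPowerSeries_iff.1 h n hn)
  · exact (hβ n (not_lt.1 hn)).symm

theorem It_inv_smul_tdt [CharZero k] {d : ℕ} (hd : d ≠ 0) {f : LaurentSeries k}
    (hf : ∀ n, 0 ≤ n → f.coeff n = 0) : It d ((d : k)⁻¹ • tdt f) = f := by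
  ext n
  change (if n < 0 then ((d : k) * (n : k)⁻¹) • ((d : k)⁻¹ • tdt f).coeff n else 0) = f.coeff n
  split_ifs with hn
  · rw [coeff_smul_tdt, smul_eq_mul, zsmul_eq_mul]
    field_simp [Nat.cast_ne_zero.2 hd, Int.cast_ne_zero.2 hn.ne]
  · exact (hf n (not_lt.1 hn)).symm

end

theorem irregular_values_eq_image_of_spectrum_of_any_DM_frame_general
    (k : Type) [Field k] [IsAlgClosed k] [CharZero k]
    (r d : ℕ) (hd : 0 < d)
    (τ : LaurentSeries k → LaurentSeries k) (hτ : ∀ f, τ f = ((d : k)⁻¹) • tdt f)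
    -- the irregular values, as elements of `k((t))_{<0} ⊆ L`
    (𝔞 : Fin r → LaurentSeries k)
    (h𝔞 : ∀ i (n : ℤ), (𝔞 i).coeff n ≠ 0 → n < 0 ∧ (d : ℤ) ∣ n)
    -- the connection matrix in a frame of `E` compatible with the irregular decomposition
    (A₁ Rm : Matrix (Fin r) (Fin r) (LaurentSeries k))
    (hA₁ : A₁ = Matrix.diagonal (fun i => τ (𝔞 i)) + Rm)
    (hRm : ∀ i j (n : ℤ), (Rm i j).coeff n ≠ 0 → 0 ≤ n ∧ (d : ℤ) ∣ n)
    -- an arbitrary frame change `G ∈ GL_r(k[[t]])`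
    (G Ginv : Matrix (Fin r) (Fin r) (LaurentSeries k))
    (hG : ∀ i j (n : ℤ), (G i j).coeff n ≠ 0 → 0 ≤ n ∧ (d : ℤ) ∣ n)
    (hGinv : ∀ i j (n : ℤ), (Ginv i j).coeff n ≠ 0 → 0 ≤ n ∧ (d : ℤ) ∣ n)
    (hGG : G * Ginv = 1)
    -- the connection matrix in the arbitrary frame
    (A : Matrix (Fin r) (Fin r) (LaurentSeries k))
    (hA : A = Ginv * A₁ * G + Ginv * (G.map τ))
    (hAsplit : (A.charpoly.map (RingHom.id (LaurentSeries k))).Splits) :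
    {x : LaurentSeries k | ∃ α, A.charpoly.IsRoot α ∧ x = It d (negPart α)}
      = Set.range 𝔞 := by
  have hint : ∀ {f : LaurentSeries k}, (∀ n, f.coeff n ≠ 0 → 0 ≤ n ∧ (d : ℤ) ∣ n) → f ∈ 𝒪 k :=
    fun hf => LaurentSeries.mem_range_ofPowerSeries_iff.2 fun n hn =>
      by_contra fun h => (hf n h).1.not_gt hn
  have h𝔞polar : ∀ i n, 0 ≤ n → (𝔞 i).coeff n = 0 := fun i n hn =>
    by_contra fun h => (h𝔞 i n h).1.not_ge hn
  have hδpolar : ∀ i n, 0 ≤ n → (τ (𝔞 i)).coeff n = 0 := fun i n hn => by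
    rw [hτ, coeff_smul_tdt, h𝔞polar i n hn, smul_zero, mul_zero]
  have hτmem : ∀ f ∈ 𝒪 k, τ f ∈ 𝒪 k := fun f hf =>
    (hτ f).symm ▸ smul_tdt_mem_range_ofPowerSeries _ hf
  have hN : ∀ i j, (Rm + G.map τ * Ginv) i j ∈ 𝒪 k := fun i j =>
    add_mem (hint (hRm i j)) <| Matrix.mul_apply (M := G.map τ) ▸ sum_mem fun l _ =>
      mul_mem (hτmem _ (hint (hG i l))) (hint (hGinv l j))
  have hchar :
      A.charpoly = (Matrix.diagonal (fun i => τ (𝔞 i)) + (Rm + G.map τ * Ginv)).charpoly := by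
    rw [hA, mul_assoc, ← mul_add, Matrix.charpoly_mul_comm, add_mul, mul_assoc, hGG, mul_one, hA₁,
      add_assoc]
  have hIt : ∀ α i, α - τ (𝔞 i) ∈ 𝒪 k → It d (negPart α) = 𝔞 i := fun α i h => by
    rw [negPart_eq_of_sub_mem h (hδpolar i), hτ, It_inv_smul_tdt hd.ne' (h𝔞polar i)]
  ext x
  constructor
  · rintro ⟨α, hα, rfl⟩
    obtain ⟨i, hi⟩ := LaurentSeries.exists_sub_mem_of_isRoot_charpoly_diagonal_add _ hN (hchar ▸ hα)
    exact ⟨i, (hIt α i hi).symm⟩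
  · rintro ⟨i, rfl⟩
    obtain ⟨α, hα, hi⟩ := LaurentSeries.exists_isRoot_charpoly_diagonal_add_sub_mem _ hN
      (fun i j h => (negPart_eq_of_sub_mem (by simp) (hδpolar i)).symm.trans
        (negPart_eq_of_sub_mem h (hδpolar j)))
      (by simpa [hchar] using hAsplit) i
    exact ⟨α, hchar ▸ hα, (hIt α i hi).symm⟩

theorem irregular_values_eq_image_of_spectrum_of_any_DM_frame
    (k : Type) [Field k] [IsAlgClosed k] [CharZero k]
    (r d : ℕ) (hd : 0 < d)
    (τ : LaurentSeries k → LaurentSeries k) (hτ : ∀ f, τ f = ((d : k)⁻¹) • tdt f)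
    -- the irregular values, as elements of `k((t))_{<0} ⊆ L`
    (𝔞 : Fin r → LaurentSeries k)
    (h𝔞 : ∀ i (n : ℤ), (𝔞 i).coeff n ≠ 0 → n < 0 ∧ (d : ℤ) ∣ n)
    -- the connection matrix in a frame of `E` compatible with the irregular decomposition
    (A₁ Rm : Matrix (Fin r) (Fin r) (LaurentSeries k))
    (hA₁ : A₁ = Matrix.diagonal (fun i => τ (𝔞 i)) + Rm)
    (hRm : ∀ i j (n : ℤ), (Rm i j).coeff n ≠ 0 → 0 ≤ n ∧ (d : ℤ) ∣ n)
    (hRmBlock : ∀ i j, Rm i j ≠ 0 → 𝔞 i = 𝔞 j)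
    -- an arbitrary frame change `G ∈ GL_r(k[[t]])`
    (G Ginv : Matrix (Fin r) (Fin r) (LaurentSeries k))
    (hG : ∀ i j (n : ℤ), (G i j).coeff n ≠ 0 → 0 ≤ n ∧ (d : ℤ) ∣ n)
    (hGinv : ∀ i j (n : ℤ), (Ginv i j).coeff n ≠ 0 → 0 ≤ n ∧ (d : ℤ) ∣ n)
    (hGG : G * Ginv = 1) (hGG' : Ginv * G = 1)
    -- the connection matrix in the arbitrary frame
    (A : Matrix (Fin r) (Fin r) (LaurentSeries k))
    (hA : A = Ginv * A₁ * G + Ginv * (G.map τ))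
    (hAsplit : (A.charpoly.map (RingHom.id (LaurentSeries k))).Splits) :
    {x : LaurentSeries k | ∃ α, A.charpoly.IsRoot α ∧ x = It d (negPart α)}
      = Set.range 𝔞 :=
  irregular_values_eq_image_of_spectrum_of_any_DM_frame_general k r d hd τ hτ 𝔞 h𝔞 A₁ Rm hA₁ hRm G
    Ginv hG hGinv hGG A hA hAsplit
end
end

section
/- Let R ⊂ ℂ be a subring finitely generated over ℤ, and let (ℰ, ∇) be a meromorphic connection on R((t)). Let 𝔞 ∈ R((t_d))_{<0}. If for every geometric point η̄ of Spec(R ⊗ 𝔽_p) for infinitely many primes p, the image ℱ_{η̄}(𝔞) ∈ k(η̄)((t_d))_{<0} is an irregular value of (ℰ, ∇) ⊗ k(η̄)((t)), then 𝔞 is an irregular value of (ℰ, ∇) ⊗ ℂ((t)). -/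
/-!
If `x ∈ P` with `P` minimal over `(p)`, then `x y = p z` for some `y ∉ (p)`; cancelling `x` in
the domain `R` shows `z ∉ (x)`, so `p` is a zero divisor on `R ⧸ (x)`. For `x ≠ 0` the zero
divisors of the finitely generated `R`-module `R ⧸ (x)` form the union of its finitely many
associated primes, and a proper ideal contains at most one rational prime; so `x` lies in such
a `P` for only finitely many `p`. Applied to the coefficients of `𝔞 - 𝔞ᵢ`, for an index `i`
that occurs for infinitely many `p`, this forces `𝔞 = 𝔞ᵢ`.
-/

noncomputable section

open Ideal

lemma Ideal.mem_minimalPrimes_span_singleton_of_minimal {R : Type*} [CommRing R] {y : R}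
    {P : Ideal R} (hP : P.IsPrime) (hyP : y ∈ P)
    (hmin : ∀ Q : Ideal R, Q.IsPrime → y ∈ Q → Q ≤ P → Q = P) :
    P ∈ (span {y}).minimalPrimes :=
  ⟨⟨hP, (span_singleton_le_iff_mem P).mpr hyP⟩, fun Q ⟨hQ, hyQ⟩ hQP =>
    (hmin Q hQ ((span_singleton_le_iff_mem Q).mp hyQ) hQP).ge⟩

lemma Ideal.exists_ne_zero_smul_eq_zero_of_mem_minimalPrimes {R : Type*} [CommRing R]
    [IsDomain R] {x y : R} (hx : x ≠ 0) {P : Ideal R} (hP : P ∈ (span {y}).minimalPrimes)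
    (hxP : x ∈ P) :
    ∃ m : R ⧸ span {x}, m ≠ 0 ∧ y • m = 0 := by
  obtain ⟨w, hw, hxw⟩ := exists_mul_mem_of_mem_minimalPrimes hP hxP
  obtain ⟨z, hz⟩ := mem_span_singleton'.mp hxw
  refine ⟨Quotient.mk _ z, fun hz0 => hw ?_, ?_⟩
  · obtain ⟨v, rfl⟩ := mem_span_singleton'.mp (Quotient.eq_zero_iff_mem.mp hz0)
    have hxw' : x * w = x * (v * y) := by rw [← hz]; ring
    exact mem_span_singleton'.mpr ⟨v, (mul_left_cancel₀ hx hxw').symm⟩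
  · rw [Algebra.smul_def, Quotient.algebraMap_eq, ← map_mul, Quotient.eq_zero_iff_mem]
    exact mem_span_singleton'.mpr ⟨w, by rw [mul_comm y z, hz, mul_comm]⟩

lemma Ideal.setOf_prime_natCast_mem_subsingleton {R : Type*} [CommRing R] {Q : Ideal R}
    (hQ : Q ≠ ⊤) : {p : ℕ | p.Prime ∧ (p : R) ∈ Q}.Subsingleton := by
  rintro p ⟨hp, hpQ⟩ q ⟨hq, hqQ⟩
  by_contra hpq
  obtain ⟨u, v, huv⟩ := ((Nat.coprime_primes hp hq).mpr hpq).cast (R := R)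
  exact hQ <| (eq_top_iff_one Q).mpr <|
    huv ▸ Q.add_mem (Q.mul_mem_left u hpQ) (Q.mul_mem_left v hqQ)

lemma finite_setOf_prime_zero_divisor {R M : Type*} [CommRing R] [IsNoetherianRing R]
    [AddCommGroup M] [Module R M] [Module.Finite R M] :
    {p : ℕ | p.Prime ∧ ∃ m : M, m ≠ 0 ∧ (p : R) • m = 0}.Finite := by
  refine ((associatedPrimes.finite R M).biUnion fun Q hQ =>
    (setOf_prime_natCast_mem_subsingleton (R := R) hQ.isPrime.ne_top).finite).subset ?_
  rintro p ⟨hp, hzd⟩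
  have hpQ : (p : R) ∈ ⋃ Q ∈ associatedPrimes R M, (Q : Set R) := by
    rwa [biUnion_associatedPrimes_eq_zero_divisors]
  obtain ⟨Q, hQ, hpQ⟩ := Set.mem_iUnion₂.mp hpQ
  exact Set.mem_iUnion₂.mpr ⟨Q, hQ, hp, hpQ⟩

lemma finite_setOf_prime_mem_minimalPrimes_span {R : Type*} [CommRing R] [IsDomain R]
    [IsNoetherianRing R] {x : R} (hx : x ≠ 0) :
    {p : ℕ | p.Prime ∧ ∃ P ∈ (span {(p : R)}).minimalPrimes, x ∈ P}.Finite :=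
  (finite_setOf_prime_zero_divisor (R := R) (M := R ⧸ span {x})).subset
    fun _ ⟨hp, _, hP, hxP⟩ => ⟨hp, exists_ne_zero_smul_eq_zero_of_mem_minimalPrimes hx hP hxP⟩

theorem irregular_value_of_reductions_irregular_general
    (R : Type) [CommRing R] [IsDomain R] [Algebra ℤ R] [Algebra.FiniteType ℤ R]
    (r : ℕ)
    (a : Fin r → LaurentSeries R)
    (𝔞 : LaurentSeries R)
    -- for infinitely many `p`, there is a geometric point of `Spec (R ⊗ 𝔽_p)` at which the
    -- reduction of `𝔞` is an irregular value of the reduced connection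
    (hinf : Set.Infinite {p : ℕ | p.Prime ∧
      ∃ P : Ideal R, P.IsPrime ∧ (p : R) ∈ P ∧
        (∀ Q : Ideal R, Q.IsPrime → (p : R) ∈ Q → Q ≤ P → Q = P) ∧
        ∃ i, ∀ n : ℤ, 𝔞.coeff n - (a i).coeff n ∈ P}) :
    ∃ i, 𝔞 = a i := by
  have := Algebra.FiniteType.isNoetherianRing ℤ R
  let S : Fin r → Set ℕ := fun i => {p | p.Prime ∧
    ∃ P ∈ (span {(p : R)}).minimalPrimes, ∀ n : ℤ, 𝔞.coeff n - (a i).coeff n ∈ P}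
  have hcover : {p : ℕ | p.Prime ∧ ∃ P : Ideal R, P.IsPrime ∧ (p : R) ∈ P ∧
      (∀ Q : Ideal R, Q.IsPrime → (p : R) ∈ Q → Q ≤ P → Q = P) ∧
      ∃ i, ∀ n : ℤ, 𝔞.coeff n - (a i).coeff n ∈ P} ⊆ ⋃ i, S i := by
    rintro p ⟨hp, P, hP, hpP, hmin, i, hcoeff⟩
    exact Set.mem_iUnion.mpr
      ⟨i, hp, P, mem_minimalPrimes_span_singleton_of_minimal hP hpP hmin, hcoeff⟩
  obtain ⟨i, hi⟩ : ∃ i, (S i).Infinite := by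
    by_contra! hfin
    exact hinf ((Set.finite_iUnion hfin).subset hcover)
  refine ⟨i, HahnSeries.ext (funext fun n => sub_eq_zero.mp ?_)⟩
  by_contra hn
  exact hi ((finite_setOf_prime_mem_minimalPrimes_span hn).subset
    fun _ ⟨hp, P, hP, hcoeff⟩ => ⟨hp, P, hP, hcoeff n⟩)

theorem irregular_value_of_reductions_irregular
    (R : Type) [CommRing R] [IsDomain R] [Algebra ℤ R] [Algebra.FiniteType ℤ R]
    (ι : R →+* ℂ) (hι : Function.Injective ι)
    (d r : ℕ) (hd : 0 < d)
    -- the irregular values of `(ℰ,∇) ⊗ R((t_d))`, attached to a compatible frame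
    (a : Fin r → LaurentSeries R)
    (ha : ∀ i (n : ℤ), 0 ≤ n → (a i).coeff n = 0)
    -- the matrix of `∇(t∂_t)` in the compatible frame: `diag(t∂_t 𝔞ᵢ) + Rm`
    (A Rm : Matrix (Fin r) (Fin r) (LaurentSeries R))
    (hA : A = Matrix.diagonal (fun i => tdt (a i)) + Rm)
    (hRmReg : ∀ i j (n : ℤ), n < 0 → (Rm i j).coeff n = 0)
    (hRmBlock : ∀ i j, Rm i j ≠ 0 → a i = a j)
    -- the candidate irregular value
    (𝔞 : LaurentSeries R) (h𝔞 : ∀ n : ℤ, 0 ≤ n → 𝔞.coeff n = 0)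
    -- for infinitely many `p`, there is a geometric point of `Spec (R ⊗ 𝔽_p)` at which the
    -- reduction of `𝔞` is an irregular value of the reduced connection
    (hinf : Set.Infinite {p : ℕ | p.Prime ∧
      ∃ P : Ideal R, P.IsPrime ∧ (p : R) ∈ P ∧
        (∀ Q : Ideal R, Q.IsPrime → (p : R) ∈ Q → Q ≤ P → Q = P) ∧
        ∃ i, ∀ n : ℤ, 𝔞.coeff n - (a i).coeff n ∈ P}) :
    ∃ i, 𝔞 = a i :=
  irregular_value_of_reductions_irregular_general R r a 𝔞 hinf
end
end
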